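/- arXiv:hep-th/9703117 — 4 statements merged into one kernel-verified Lean document; each statement's English description precedes it below -/
import Mathlib

section
/- Let U ⊆ ℂ be open, H : U → ℝ smooth and nowhere zero, and ω : U → ℂ smooth, satisfying the Kemmotsu integrability condition H·(∂∂̄ω − 2ω̄ ∂ω ∂̄ω/(1+|ω|²)) = (∂H)·(∂̄ω) on U. Then the ℝ³-valued 1-form θ := Re(Φ dz) (with components θ = (Re Φ) dx − (Im Φ) dy) is closed on U; equivalently, Im(∂̄Φ) = 0 componentwise, where Φ := (∂ω̄)/(H(1+|ω|²)²) · (ω²−1, i(1+ω²), −2ω). -/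
open Complex

noncomputable section

/-- Wirtinger derivative `∂f = ½(∂ₓf − i ∂_yf)`. -/
def wirt {E : Type*} [NormedAddCommGroup E] [NormedSpace ℂ E] (f : ℂ → E) (z : ℂ) : E :=
  (2 : ℂ)⁻¹ • (fderiv ℝ f z 1 - Complex.I • fderiv ℝ f z Complex.I)

/-- Conjugate Wirtinger derivative `∂̄f = ½(∂ₓf + i ∂_yf)`. -/
def wirtb {E : Type*} [NormedAddCommGroup E] [NormedSpace ℂ E] (f : ℂ → E) (z : ℂ) : E :=
  (2 : ℂ)⁻¹ • (fderiv ℝ f z 1 + Complex.I • fderiv ℝ f z Complex.I)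

/-- The Kemmotsu data `Φ = (∂ω̄)/(H(1+|ω|²)²) · (ω²−1, i(1+ω²), −2ω)`. -/
def kemPhi (H : ℂ → ℝ) (ω : ℂ → ℂ) (z : ℂ) : Fin 3 → ℂ :=
  (wirt (fun w => (starRingEnd ℂ) (ω w)) z /
      ((H z : ℂ) * (1 + (Complex.normSq (ω z) : ℂ)) ^ 2)) •
    ![ω z ^ 2 - 1, Complex.I * (1 + ω z ^ 2), -2 * ω z]

set_option maxHeartbeats 1000000

section lemmas
variable {f g : ℂ → ℂ} {z : ℂ}

lemma wirtb_congr (h : f =ᶠ[nhds z] g) : wirtb f z = wirtb g z := by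
  unfold wirtb; rw [h.fderiv_eq]

lemma wirtb_mul (hf : DifferentiableAt ℝ f z) (hg : DifferentiableAt ℝ g z) :
    wirtb (fun w => f w * g w) z = f z * wirtb g z + g z * wirtb f z := by
  unfold wirtb
  rw [fderiv_fun_mul hf hg]
  simp only [ContinuousLinearMap.add_apply, ContinuousLinearMap.coe_smul', Pi.smul_apply,
    smul_eq_mul]
  ring

lemma wirtb_add (hf : DifferentiableAt ℝ f z) (hg : DifferentiableAt ℝ g z) :
    wirtb (fun w => f w + g w) z = wirtb f z + wirtb g z := by
  unfold wirtb
  rw [fderiv_fun_add hf hg]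
  simp only [ContinuousLinearMap.add_apply, smul_eq_mul]
  ring

lemma wirtb_const (k : ℂ) : wirtb (fun _ => k) z = 0 := by
  unfold wirtb
  simp [fderiv_const]

lemma wirtb_conj : wirtb (fun w => (starRingEnd ℂ) (f w)) z = (starRingEnd ℂ) (wirt f z) := by
  unfold wirt wirtb
  have h : (fun w => (starRingEnd ℂ) (f w)) = ⇑Complex.conjCLE ∘ f := rfl
  rw [h, ContinuousLinearEquiv.comp_fderiv]
  simp only [ContinuousLinearMap.coe_comp', Function.comp_apply, smul_eq_mul, map_mul, map_sub,
    map_add, map_inv₀, map_ofNat, Complex.conj_I]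
  show 2⁻¹ * ((starRingEnd ℂ) _ + I * (starRingEnd ℂ) _) = _
  ring

lemma wirt_conj : wirt (fun w => (starRingEnd ℂ) (f w)) z = (starRingEnd ℂ) (wirtb f z) := by
  unfold wirt wirtb
  have h : (fun w => (starRingEnd ℂ) (f w)) = ⇑Complex.conjCLE ∘ f := rfl
  rw [h, ContinuousLinearEquiv.comp_fderiv]
  simp only [ContinuousLinearMap.coe_comp', Function.comp_apply, smul_eq_mul, map_mul, map_add,
    map_inv₀, map_ofNat, Complex.conj_I]
  show 2⁻¹ * ((starRingEnd ℂ) _ - I * (starRingEnd ℂ) _) = _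
  ring

lemma wirtb_pi {F : ℂ → Fin 3 → ℂ} (h : ∀ i, DifferentiableAt ℝ (fun w => F w i) z) (i : Fin 3) :
    wirtb F z i = wirtb (fun w => F w i) z := by
  unfold wirtb
  rw [fderiv_pi h]
  simp [ContinuousLinearMap.pi_apply]

end lemmas

/-- the numerator function -/
def kg (ω : ℂ → ℂ) : ℂ → ℂ := wirt (fun u => (starRingEnd ℂ) (ω u))

/-- the denominator function -/
def kD (H : ℂ → ℝ) (ω : ℂ → ℂ) (w : ℂ) : ℂ :=
  (H w : ℂ) * (1 + ω w * (starRingEnd ℂ) (ω w)) ^ 2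

/-- the scalar factor -/
def kf (H : ℂ → ℝ) (ω : ℂ → ℂ) (w : ℂ) : ℂ := kg ω w / kD H ω w

/-- under the Kemmotsu integrability condition the ℝ³-valued one-form
`θ = Re(Φ dz)` is closed, equivalently `Im(∂̄Φ) = 0` componentwise. -/
theorem closedness_of_kemmotsu_form
    (U : Set ℂ) (hU : IsOpen U)
    (H : ℂ → ℝ) (hH : ContDiffOn ℝ (⊤ : ℕ∞) H U) (hHne : ∀ z ∈ U, H z ≠ 0)
    (ω : ℂ → ℂ) (hω : ContDiffOn ℝ (⊤ : ℕ∞) ω U)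
    (kemmotsu : ∀ z ∈ U,
      (H z : ℂ) * (wirt (wirtb ω) z -
        2 * (starRingEnd ℂ) (ω z) * wirt ω z * wirtb ω z /
          (1 + (Complex.normSq (ω z) : ℂ))) =
      wirt (fun w => (H w : ℂ)) z * wirtb ω z) :
    ∀ z ∈ U, ∀ i : Fin 3, (wirtb (kemPhi H ω) z i).im = 0 := by
  intro z hz i
  have hUz : U ∈ nhds z := hU.mem_nhds hz
  have hωz : DifferentiableAt ℝ ω z :=
    (hω.contDiffAt hUz).differentiableAt (by simp)
  have hHz : DifferentiableAt ℝ (fun w => ((H w : ℝ) : ℂ)) z :=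
    Complex.ofRealCLM.differentiableAt.comp z ((hH.contDiffAt hUz).differentiableAt (by simp))
  have hcωz : DifferentiableAt ℝ (fun w => (starRingEnd ℂ) (ω w)) z :=
    Complex.conjCLE.differentiable.differentiableAt.comp z hωz
  -- differentiability of wirtb ω
  have hfd : DifferentiableAt ℝ (fderiv ℝ ω) z :=
    ((hω.contDiffAt hUz).fderiv_right (m := 1) (by exact WithTop.coe_le_coe.mpr le_top)).differentiableAt (by simp)
  have happ : ∀ v : ℂ, DifferentiableAt ℝ (fun w => fderiv ℝ ω w v) z := fun v =>
    (ContinuousLinearMap.apply ℝ ℂ v).differentiableAt.comp z hfd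
  have hwbω : DifferentiableAt ℝ (wirtb ω) z := by
    have e : wirtb ω = fun w => (2:ℂ)⁻¹ • (fderiv ℝ ω w 1 + Complex.I • fderiv ℝ ω w Complex.I) :=
      rfl
    rw [e]
    exact (((happ 1).add ((happ Complex.I).const_smul Complex.I)).const_smul ((2:ℂ)⁻¹))
  -- the function kg ω is conj ∘ wirtb ω
  have hgfun : kg ω = fun w => (starRingEnd ℂ) (wirtb ω w) := by
    funext w; exact wirt_conj
  have hgd : DifferentiableAt ℝ (kg ω) z := by
    rw [hgfun]
    exact Complex.conjCLE.differentiable.differentiableAt.comp z hwbω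
  -- differentiability of kD
  have hQd : DifferentiableAt ℝ (fun w => 1 + ω w * (starRingEnd ℂ) (ω w)) z :=
    (hωz.mul hcωz).const_add 1
  have hDd : DifferentiableAt ℝ (kD H ω) z := by
    have e : kD H ω = fun w => ((H w : ℝ) : ℂ) *
        ((1 + ω w * (starRingEnd ℂ) (ω w)) * (1 + ω w * (starRingEnd ℂ) (ω w))) := by
      funext w; simp only [kD]; ring
    rw [e]
    exact hHz.mul (hQd.mul hQd)
  -- nonvanishing
  have hH0 : ((H z : ℝ) : ℂ) ≠ 0 := Complex.ofReal_ne_zero.mpr (hHne z hz)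
  have hN : (1 : ℂ) + (Complex.normSq (ω z) : ℂ) ≠ 0 := by
    have h1 : (0:ℝ) < 1 + Complex.normSq (ω z) := by
      have := Complex.normSq_nonneg (ω z); linarith
    intro hc
    have h2 : ((1 + Complex.normSq (ω z) : ℝ) : ℂ) = 0 := by push_cast; linear_combination hc
    exact h1.ne' (by exact_mod_cast h2)
  have hNne : (1 : ℂ) + ω z * (starRingEnd ℂ) (ω z) ≠ 0 := by
    rw [Complex.mul_conj]; exact hN
  have hNne' : (1 : ℂ) + (starRingEnd ℂ) (ω z) * ω z ≠ 0 := by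
    rw [mul_comm]; exact hNne
  have hDz : kD H ω z ≠ 0 := by
    unfold kD
    exact mul_ne_zero hH0 (pow_ne_zero 2 hNne)
  have hff : DifferentiableAt ℝ (kf H ω) z := by
    have e : kf H ω = fun w => kg ω w * (kD H ω w)⁻¹ := by
      funext w; rw [kf, div_eq_mul_inv]
    rw [e]
    exact hgd.mul (hDd.inv hDz)
  -- abbreviations
  have kz := kemmotsu z hz
  set a := ω z with ha
  set b := wirtb ω z with hb
  set c := wirt ω z with hc
  set Ee := wirt (wirtb ω) z with hEe
  set p := wirt (fun w => (H w : ℂ)) z with hp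
  -- computed values
  have h_gz : kg ω z = (starRingEnd ℂ) b := by rw [hgfun]
  have h_wbg : wirtb (kg ω) z = (starRingEnd ℂ) Ee := by
    rw [hgfun]; exact wirtb_conj
  have h_wbcω : wirtb (fun w => (starRingEnd ℂ) (ω w)) z = (starRingEnd ℂ) c := wirtb_conj
  have h_wbH : wirtb (fun w => ((H w : ℝ) : ℂ)) z = (starRingEnd ℂ) p := by
    have e : (fun w => ((H w : ℝ) : ℂ)) = fun w => (starRingEnd ℂ) ((H w : ℝ) : ℂ) := by
      funext w; exact (Complex.conj_ofReal _).symm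
    conv_lhs => rw [e]
    exact wirtb_conj
  have h_wbQ : wirtb (fun w => 1 + ω w * (starRingEnd ℂ) (ω w)) z
      = a * (starRingEnd ℂ) c + (starRingEnd ℂ) a * b := by
    have e : (fun w => 1 + ω w * (starRingEnd ℂ) (ω w))
        = fun w => (1:ℂ) + (fun w => ω w * (starRingEnd ℂ) (ω w)) w := rfl
    rw [e, wirtb_add (differentiableAt_const 1) (hωz.fun_mul hcωz), wirtb_const,
      wirtb_mul hωz hcωz, h_wbcω]
    ring
  have hwD : wirtb (kD H ω) z =
      ((H z : ℝ) : ℂ) * (2 * (1 + a * (starRingEnd ℂ) a) *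
        (a * (starRingEnd ℂ) c + (starRingEnd ℂ) a * b))
      + ((1 + a * (starRingEnd ℂ) a) ^ 2) * (starRingEnd ℂ) p := by
    have e : kD H ω = fun w => ((H w : ℝ) : ℂ) *
        ((1 + ω w * (starRingEnd ℂ) (ω w)) * (1 + ω w * (starRingEnd ℂ) (ω w))) := by
      funext w; simp only [kD]; ring
    rw [e, wirtb_mul hHz (hQd.fun_mul hQd), wirtb_mul hQd hQd, h_wbQ, h_wbH]
    ring
  -- value of kf at z
  have hfz : kf H ω z = (starRingEnd ℂ) b / (((H z : ℝ) : ℂ) * (1 + a * (starRingEnd ℂ) a) ^ 2) := by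
    rw [kf, h_gz, kD]
  -- equation for wirtb kf from the product rule
  have hfD : (fun w => kf H ω w * kD H ω w) =ᶠ[nhds z] kg ω := by
    filter_upwards [hDd.continuousAt.eventually_ne hDz] with w hw
    rw [kf, div_mul_cancel₀ _ hw]
  have h9 : (starRingEnd ℂ) Ee = kf H ω z * wirtb (kD H ω) z + kD H ω z * wirtb (kf H ω) z := by
    calc (starRingEnd ℂ) Ee = wirtb (kg ω) z := h_wbg.symm
      _ = wirtb (fun w => kf H ω w * kD H ω w) z := (wirtb_congr hfD).symm
      _ = _ := wirtb_mul hff hDd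
  -- use integrability to compute Ee
  rw [← Complex.mul_conj] at kz
  have hE : Ee = p * b / ((H z : ℝ) : ℂ)
      + 2 * (starRingEnd ℂ) a * c * b / (1 + a * (starRingEnd ℂ) a) := by
    field_simp at kz ⊢
    linear_combination kz
  have hcE : (starRingEnd ℂ) Ee = (starRingEnd ℂ) p * (starRingEnd ℂ) b / ((H z : ℝ) : ℂ)
      + 2 * a * (starRingEnd ℂ) c * (starRingEnd ℂ) b / (1 + a * (starRingEnd ℂ) a) := by
    rw [hE]
    simp only [map_add, map_div₀, map_mul, map_ofNat, map_one, Complex.conj_conj,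
      Complex.conj_ofReal]
    ring
  -- the key formula for wirtb (kf H ω) z
  have hwf : wirtb (kf H ω) z =
      -2 * (starRingEnd ℂ) a * (starRingEnd ℂ) b * b /
        (((H z : ℝ) : ℂ) * (1 + a * (starRingEnd ℂ) a) ^ 3) := by
    have h9' : wirtb (kf H ω) z = ((starRingEnd ℂ) Ee - kf H ω z * wirtb (kD H ω) z) / kD H ω z := by
      rw [eq_div_iff hDz]; linear_combination -h9
    rw [h9', hcE, hfz, hwD, kD]
    rw [← ha]
    field_simp [hH0, hNne]
    ring
  -- the coordinate functions
  have hcoord0 : (fun w => kemPhi H ω w 0) = fun w => kf H ω w * (ω w * ω w - 1) := by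
    funext w
    simp only [kemPhi, kf, kg, kD, Pi.smul_apply, smul_eq_mul, Matrix.cons_val_zero,
      Matrix.cons_val_one, Matrix.head_cons, Matrix.cons_val_two, Matrix.tail_cons,
      Complex.mul_conj]
    ring
  have hcoord1 : (fun w => kemPhi H ω w 1)
      = fun w => kf H ω w * (Complex.I * (1 + ω w * ω w)) := by
    funext w
    simp only [kemPhi, kf, kg, kD, Pi.smul_apply, smul_eq_mul, Matrix.cons_val_zero,
      Matrix.cons_val_one, Matrix.head_cons, Matrix.cons_val_two, Matrix.tail_cons,
      Complex.mul_conj]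
    ring
  have hcoord2 : (fun w => kemPhi H ω w 2) = fun w => kf H ω w * (-2 * ω w) := by
    funext w
    simp only [kemPhi, kf, kg, kD, Pi.smul_apply, smul_eq_mul, Matrix.cons_val_zero,
      Matrix.cons_val_one, Matrix.head_cons, Matrix.cons_val_two, Matrix.tail_cons,
      Complex.mul_conj]
  have hd0 : DifferentiableAt ℝ (fun w => kemPhi H ω w 0) z := by
    rw [hcoord0]; exact hff.mul ((hωz.mul hωz).sub_const 1)
  have hd1 : DifferentiableAt ℝ (fun w => kemPhi H ω w 1) z := by
    rw [hcoord1]; exact hff.mul (((hωz.mul hωz).const_add 1).const_mul Complex.I)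
  have hd2 : DifferentiableAt ℝ (fun w => kemPhi H ω w 2) z := by
    rw [hcoord2]; exact hff.mul (hωz.const_mul (-2))
  have hdiffs : ∀ j : Fin 3, DifferentiableAt ℝ (fun w => kemPhi H ω w j) z := by
    intro j; fin_cases j
    · exact hd0
    · exact hd1
    · exact hd2
  -- wirtb of the polynomial factors
  have hwV0 : wirtb (fun w => ω w * ω w - 1) z = 2 * a * b := by
    have e : (fun w => ω w * ω w - 1) = fun w => ω w * ω w + (-1 : ℂ) := by
      funext w; ring
    rw [e, wirtb_add (hωz.fun_mul hωz) (differentiableAt_const _), wirtb_const,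
      wirtb_mul hωz hωz]
    ring
  have hwV1 : wirtb (fun w => Complex.I * (1 + ω w * ω w)) z = 2 * Complex.I * a * b := by
    have e : (fun w => Complex.I * (1 + ω w * ω w))
        = fun w => (fun _ => Complex.I) w * ((1:ℂ) + ω w * ω w) := rfl
    rw [e, wirtb_mul (differentiableAt_const _) ((hωz.fun_mul hωz).const_add 1),
      wirtb_add (differentiableAt_const 1) (hωz.fun_mul hωz), wirtb_const, wirtb_const,
      wirtb_mul hωz hωz]
    ring
  have hwV2 : wirtb (fun w => -2 * ω w) z = -2 * b := by
    have e : (fun w => -2 * ω w) = fun w => (fun _ => (-2:ℂ)) w * ω w := rfl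
    rw [e, wirtb_mul (differentiableAt_const _) hωz, wirtb_const]
    ring
  -- the three components
  have him0 : (wirtb (kemPhi H ω) z 0).im = 0 := by
    rw [wirtb_pi hdiffs 0, hcoord0, wirtb_mul hff ((hωz.fun_mul hωz).sub_const 1), hwV0, hwf, hfz]
    rw [← Complex.conj_eq_iff_im]
    simp only [map_add, map_div₀, map_mul, map_sub, map_pow, map_one, map_ofNat, map_neg,
      Complex.conj_conj, Complex.conj_ofReal, Complex.conj_I]
    field_simp [hH0, hNne, hNne']
    ring
  have him1 : (wirtb (kemPhi H ω) z 1).im = 0 := by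
    rw [wirtb_pi hdiffs 1, hcoord1,
      wirtb_mul hff (((hωz.fun_mul hωz).const_add 1).const_mul Complex.I), hwV1, hwf, hfz]
    rw [← Complex.conj_eq_iff_im]
    simp only [map_add, map_div₀, map_mul, map_sub, map_pow, map_one, map_ofNat, map_neg,
      Complex.conj_conj, Complex.conj_ofReal, Complex.conj_I]
    field_simp [hH0, hNne, hNne']
    ring
  have him2 : (wirtb (kemPhi H ω) z 2).im = 0 := by
    rw [wirtb_pi hdiffs 2, hcoord2, wirtb_mul hff (hωz.const_mul (-2)), hwV2, hwf, hfz]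
    rw [← Complex.conj_eq_iff_im]
    simp only [map_add, map_div₀, map_mul, map_sub, map_pow, map_one, map_ofNat, map_neg,
      Complex.conj_conj, Complex.conj_ofReal, Complex.conj_I]
    field_simp [hH0, hNne, hNne']
    ring
  fin_cases i
  · exact him0
  · exact him1
  · exact him2
end
end

section
/- Let U ⊆ ℂ be open, X : U → ℝ³ a smooth conformal immersion (∂X·∂X = 0, g := ∂X·∂̄X > 0) with unit normal n := (∂ₓX × ∂_yX)/|∂ₓX × ∂_yX|, and c ≠ 0 a real constant. Define the M₂(ℂ)-valued functions A_z := c (∂X)·σ and A_z̄ := −c (∂̄X)·σ. Then the zero-curvature condition ∂A_z̄ − ∂̄A_z + A_z A_z̄ − A_z̄ A_z = 0 holds on U if and only if ∂̄∂X = c·g·n on U, i.e. if and only if X has constant mean curvature c. -/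
open Complex

noncomputable section

/-- Complex-bilinear dot product on ℂ³. -/
def cdot3 (a b : Fin 3 → ℂ) : ℂ := ∑ i, a i * b i

/-- Embedding ℝ³ ↪ ℂ³. -/
def toC3 (v : Fin 3 → ℝ) : Fin 3 → ℂ := fun i => (v i : ℂ)

/-- Euclidean norm on ℝ³. -/
def rnorm3 (v : Fin 3 → ℝ) : ℝ := Real.sqrt (∑ i, v i ^ 2)

/-- Cross product on ℝ³. -/
def crossR (a b : Fin 3 → ℝ) : Fin 3 → ℝ :=
  ![a 1 * b 2 - a 2 * b 1, a 2 * b 0 - a 0 * b 2, a 0 * b 1 - a 1 * b 0]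

/-- The complexification `z ↦ X(z)` of a map `X : ℂ → ℝ³`. -/
def cplx (X : ℂ → Fin 3 → ℝ) : ℂ → Fin 3 → ℂ := fun z => toC3 (X z)

/-- The unit normal `n = (∂ₓX × ∂_yX)/|∂ₓX × ∂_yX|` of `X : ℂ → ℝ³`. -/
def unitNormal (X : ℂ → Fin 3 → ℝ) (z : ℂ) : Fin 3 → ℝ :=
  (rnorm3 (crossR (fderiv ℝ X z 1) (fderiv ℝ X z Complex.I)))⁻¹ •
    crossR (fderiv ℝ X z 1) (fderiv ℝ X z Complex.I)

/-- The mean curvature function `H = (∂̄∂X·n)/g` of a conformal immersion. -/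
def meanCurvC (X : ℂ → Fin 3 → ℝ) (z : ℂ) : ℂ :=
  cdot3 (wirtb (fun w => wirt (cplx X) w) z) (toC3 (unitNormal X z)) /
    cdot3 (wirt (cplx X) z) (wirtb (cplx X) z)

/-- The vector `n_ω = (2 Re ω, −2 Im ω, |ω|²−1)/(1+|ω|²)` on the unit sphere. -/
def gaussNormal (w : ℂ) : Fin 3 → ℝ :=
  (1 + Complex.normSq w)⁻¹ • ![2 * w.re, -2 * w.im, Complex.normSq w - 1]

/-- `a·σ = a₁σ₁ + a₂σ₂ + a₃σ₃` for `a ∈ ℂ³` and the Pauli matrices `σᵢ`. -/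
def pauliDot (a : Fin 3 → ℂ) : Matrix (Fin 2) (Fin 2) ℂ :=
  a 0 • !![0, 1; 1, 0] + a 1 • !![0, -Complex.I; Complex.I, 0] + a 2 • !![1, 0; 0, -1]

/-- Entrywise Wirtinger derivative `∂` of a matrix-valued function. -/
def wirtM (F : ℂ → Matrix (Fin 2) (Fin 2) ℂ) (z : ℂ) : Matrix (Fin 2) (Fin 2) ℂ :=
  Matrix.of fun A B => wirt (fun w => F w A B) z

/-- Entrywise Wirtinger derivative `∂̄` of a matrix-valued function. -/
def wirtbM (F : ℂ → Matrix (Fin 2) (Fin 2) ℂ) (z : ℂ) : Matrix (Fin 2) (Fin 2) ℂ :=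
  Matrix.of fun A B => wirtb (fun w => F w A B) z

lemma wirt_clm {E F : Type*} [NormedAddCommGroup E] [NormedSpace ℂ E]
    [NormedAddCommGroup F] [NormedSpace ℂ F] (L : E →L[ℂ] F) (g : ℂ → E) (z : ℂ)
    (h : DifferentiableAt ℝ g z) : wirt (fun w => L (g w)) z = L (wirt g z) := by
  have hL : fderiv ℝ (fun w => L (g w)) z = (L.restrictScalars ℝ).comp (fderiv ℝ g z) :=
    ((L.restrictScalars ℝ).hasFDerivAt.comp z h.hasFDerivAt).fderiv
  simp [wirt, hL, map_sub, map_smul]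

lemma wirtb_clm {E F : Type*} [NormedAddCommGroup E] [NormedSpace ℂ E]
    [NormedAddCommGroup F] [NormedSpace ℂ F] (L : E →L[ℂ] F) (g : ℂ → E) (z : ℂ)
    (h : DifferentiableAt ℝ g z) : wirtb (fun w => L (g w)) z = L (wirtb g z) := by
  have hL : fderiv ℝ (fun w => L (g w)) z = (L.restrictScalars ℝ).comp (fderiv ℝ g z) :=
    ((L.restrictScalars ℝ).hasFDerivAt.comp z h.hasFDerivAt).fderiv
  simp [wirtb, hL, map_add, map_smul]

section second
variable {E : Type*} [NormedAddCommGroup E] [NormedSpace ℂ E] (f : ℂ → E) (z : ℂ)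

lemma fderiv_wirtb_apply (hf : ContDiffAt ℝ 2 f z) (u : ℂ) :
    fderiv ℝ (wirtb f) z u =
      (2:ℂ)⁻¹ • (fderiv ℝ (fderiv ℝ f) z u 1 + Complex.I • fderiv ℝ (fderiv ℝ f) z u Complex.I) := by
  have hD : HasFDerivAt (fderiv ℝ f) (fderiv ℝ (fderiv ℝ f) z) z :=
    ((hf.fderiv_right (m := 1) (by norm_num)).differentiableAt one_ne_zero).hasFDerivAt
  set D := fderiv ℝ (fderiv ℝ f) z
  have h1 : HasFDerivAt (fun w => fderiv ℝ f w 1)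
      ((ContinuousLinearMap.apply ℝ E (1:ℂ)).comp D) z :=
    (ContinuousLinearMap.apply ℝ E (1:ℂ)).hasFDerivAt.comp z hD
  have h2 : HasFDerivAt (fun w => fderiv ℝ f w Complex.I)
      ((ContinuousLinearMap.apply ℝ E (Complex.I)).comp D) z :=
    (ContinuousLinearMap.apply ℝ E (Complex.I)).hasFDerivAt.comp z hD
  have h3 : HasFDerivAt (wirtb f)
      ((2:ℂ)⁻¹ • (((ContinuousLinearMap.apply ℝ E (1:ℂ)).comp D) +
        Complex.I • ((ContinuousLinearMap.apply ℝ E (Complex.I)).comp D))) z :=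
    (h1.add (h2.const_smul Complex.I)).const_smul ((2:ℂ)⁻¹)
  rw [h3.fderiv]
  simp

lemma fderiv_wirt_apply (hf : ContDiffAt ℝ 2 f z) (u : ℂ) :
    fderiv ℝ (wirt f) z u =
      (2:ℂ)⁻¹ • (fderiv ℝ (fderiv ℝ f) z u 1 - Complex.I • fderiv ℝ (fderiv ℝ f) z u Complex.I) := by
  have hD : HasFDerivAt (fderiv ℝ f) (fderiv ℝ (fderiv ℝ f) z) z :=
    ((hf.fderiv_right (m := 1) (by norm_num)).differentiableAt one_ne_zero).hasFDerivAt
  set D := fderiv ℝ (fderiv ℝ f) z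
  have h1 : HasFDerivAt (fun w => fderiv ℝ f w 1)
      ((ContinuousLinearMap.apply ℝ E (1:ℂ)).comp D) z :=
    (ContinuousLinearMap.apply ℝ E (1:ℂ)).hasFDerivAt.comp z hD
  have h2 : HasFDerivAt (fun w => fderiv ℝ f w Complex.I)
      ((ContinuousLinearMap.apply ℝ E (Complex.I)).comp D) z :=
    (ContinuousLinearMap.apply ℝ E (Complex.I)).hasFDerivAt.comp z hD
  have h3 : HasFDerivAt (wirt f)
      ((2:ℂ)⁻¹ • (((ContinuousLinearMap.apply ℝ E (1:ℂ)).comp D) -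
        Complex.I • ((ContinuousLinearMap.apply ℝ E (Complex.I)).comp D))) z :=
    (h1.sub (h2.const_smul Complex.I)).const_smul ((2:ℂ)⁻¹)
  rw [h3.fderiv]
  simp

lemma wirt_wirtb_eq_wirtb_wirt (hf : ContDiffAt ℝ 2 f z) :
    wirt (fun w => wirtb f w) z = wirtb (fun w => wirt f w) z := by
  have hsymm := hf.isSymmSndFDerivAt (by norm_num)
  have h1 := fderiv_wirtb_apply f z hf
  have h2 := fderiv_wirt_apply f z hf
  show wirt (wirtb f) z = wirtb (wirt f) z
  rw [wirt, wirtb, h1, h1, h2, h2, hsymm Complex.I 1]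
  rw [smul_sub, smul_add, smul_smul, smul_smul]
  module

end second

def crossC (a b : Fin 3 → ℂ) : Fin 3 → ℂ :=
  ![a 1 * b 2 - a 2 * b 1, a 2 * b 0 - a 0 * b 2, a 0 * b 1 - a 1 * b 0]

lemma pauliDot_apply (a : Fin 3 → ℂ) (A B : Fin 2) :
    pauliDot a A B = a 0 * (!![0, 1; 1, 0] : Matrix (Fin 2) (Fin 2) ℂ) A B
      + a 1 * (!![0, -Complex.I; Complex.I, 0] : Matrix (Fin 2) (Fin 2) ℂ) A B
      + a 2 * (!![1, 0; 0, -1] : Matrix (Fin 2) (Fin 2) ℂ) A B := by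
  fin_cases A <;> fin_cases B <;> simp [pauliDot] <;> ring

lemma pauliDot_smul (s : ℂ) (a : Fin 3 → ℂ) : pauliDot (s • a) = s • pauliDot a := by
  ext A B
  fin_cases A <;> fin_cases B <;> simp [pauliDot] <;> ring

lemma pauliDot_add (a b : Fin 3 → ℂ) : pauliDot (a + b) = pauliDot a + pauliDot b := by
  ext A B
  fin_cases A <;> fin_cases B <;> simp [pauliDot] <;> ring

lemma pauliDot_eq_zero_iff (a : Fin 3 → ℂ) : pauliDot a = 0 ↔ a = 0 := by
  constructor
  · intro h
    have h00 := congrFun (congrFun h 0) 0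
    have h01 := congrFun (congrFun h 0) 1
    have h10 := congrFun (congrFun h 1) 0
    simp [pauliDot] at h00 h01 h10
    funext i
    fin_cases i
    · show a 0 = 0; linear_combination (h01 + h10) / 2
    · show a 1 = 0; linear_combination (-Complex.I/2) * (h10 - h01) + (a 1) * Complex.I_sq
    · exact h00
  · rintro rfl; ext A B; fin_cases A <;> fin_cases B <;> simp [pauliDot]

lemma pauli_commutator (a b : Fin 3 → ℂ) :
    pauliDot a * pauliDot b - pauliDot b * pauliDot a
      = (2 * Complex.I) • pauliDot (crossC a b) := by
  ext A B
  fin_cases A <;> fin_cases B <;>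
    simp [pauliDot, crossC, Matrix.mul_apply, Fin.sum_univ_two] <;>
      (try ring) <;> (ring_nf; simp only [Complex.I_sq]; ring)

lemma differentiableAt_wirtb {E : Type*} [NormedAddCommGroup E] [NormedSpace ℂ E]
    (f : ℂ → E) (z : ℂ) (hf : ContDiffAt ℝ 2 f z) : DifferentiableAt ℝ (wirtb f) z := by
  have hD : HasFDerivAt (fderiv ℝ f) (fderiv ℝ (fderiv ℝ f) z) z :=
    ((hf.fderiv_right (m := 1) (by norm_num)).differentiableAt one_ne_zero).hasFDerivAt
  have h1 := (ContinuousLinearMap.apply ℝ E (1:ℂ)).hasFDerivAt.comp z hD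
  have h2 := (ContinuousLinearMap.apply ℝ E (Complex.I)).hasFDerivAt.comp z hD
  exact (((h1.add (h2.const_smul Complex.I)).const_smul ((2:ℂ)⁻¹)).differentiableAt :)

lemma differentiableAt_wirt {E : Type*} [NormedAddCommGroup E] [NormedSpace ℂ E]
    (f : ℂ → E) (z : ℂ) (hf : ContDiffAt ℝ 2 f z) : DifferentiableAt ℝ (wirt f) z := by
  have hD : HasFDerivAt (fderiv ℝ f) (fderiv ℝ (fderiv ℝ f) z) z :=
    ((hf.fderiv_right (m := 1) (by norm_num)).differentiableAt one_ne_zero).hasFDerivAt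
  have h1 := (ContinuousLinearMap.apply ℝ E (1:ℂ)).hasFDerivAt.comp z hD
  have h2 := (ContinuousLinearMap.apply ℝ E (Complex.I)).hasFDerivAt.comp z hD
  exact (((h1.sub (h2.const_smul Complex.I)).const_smul ((2:ℂ)⁻¹)).differentiableAt :)

def pauliEntry (A B : Fin 2) : (Fin 3 → ℂ) →L[ℂ] ℂ :=
  ((!![0, 1; 1, 0] : Matrix (Fin 2) (Fin 2) ℂ) A B) • ContinuousLinearMap.proj 0
    + ((!![0, -Complex.I; Complex.I, 0] : Matrix (Fin 2) (Fin 2) ℂ) A B) • ContinuousLinearMap.proj 1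
    + ((!![1, 0; 0, -1] : Matrix (Fin 2) (Fin 2) ℂ) A B) • ContinuousLinearMap.proj 2

lemma pauliEntry_apply (A B : Fin 2) (v : Fin 3 → ℂ) :
    pauliEntry A B v = pauliDot v A B := by
  rw [pauliDot_apply]
  simp [pauliEntry]
  ring

lemma wirtM_smul_pauli (s : ℂ) (g : ℂ → Fin 3 → ℂ) (z : ℂ) (hg : DifferentiableAt ℝ g z) :
    wirtM (fun w => s • pauliDot (g w)) z = s • pauliDot (wirt g z) := by
  ext A B
  show wirt (fun w => (s • pauliDot (g w)) A B) z = (s • pauliDot (wirt g z)) A B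
  have he : (fun w => (s • pauliDot (g w)) A B) = fun w => (s • pauliEntry A B) (g w) := by
    funext w
    simp [pauliEntry_apply]
  rw [he, wirt_clm (s • pauliEntry A B) g z hg]
  simp [pauliEntry_apply]

lemma wirtbM_smul_pauli (s : ℂ) (g : ℂ → Fin 3 → ℂ) (z : ℂ) (hg : DifferentiableAt ℝ g z) :
    wirtbM (fun w => s • pauliDot (g w)) z = s • pauliDot (wirtb g z) := by
  ext A B
  show wirtb (fun w => (s • pauliDot (g w)) A B) z = (s • pauliDot (wirtb g z)) A B
  have he : (fun w => (s • pauliDot (g w)) A B) = fun w => (s • pauliEntry A B) (g w) := by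
    funext w
    simp [pauliEntry_apply]
  rw [he, wirtb_clm (s • pauliEntry A B) g z hg]
  simp [pauliEntry_apply]

def toC3L : (Fin 3 → ℝ) →L[ℝ] (Fin 3 → ℂ) :=
  ContinuousLinearMap.pi (fun i => Complex.ofRealCLM.comp (ContinuousLinearMap.proj i))

lemma fderiv_cplx (X : ℂ → Fin 3 → ℝ) (z : ℂ) (hd : DifferentiableAt ℝ X z) (v : ℂ) :
    fderiv ℝ (cplx X) z v = toC3 (fderiv ℝ X z v) := by
  have : cplx X = fun w => toC3L (X w) := rfl
  rw [this, show (fun w => toC3L (X w)) = (⇑toC3L ∘ X) from rfl,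
    (toC3L.hasFDerivAt.comp z hd.hasFDerivAt).fderiv]
  rfl

lemma wirt_cplx (X : ℂ → Fin 3 → ℝ) (z : ℂ) (hd : DifferentiableAt ℝ X z) :
    wirt (cplx X) z = (2:ℂ)⁻¹ • (toC3 (fderiv ℝ X z 1) - Complex.I • toC3 (fderiv ℝ X z Complex.I)) := by
  rw [wirt, fderiv_cplx X z hd, fderiv_cplx X z hd]

lemma wirtb_cplx (X : ℂ → Fin 3 → ℝ) (z : ℂ) (hd : DifferentiableAt ℝ X z) :
    wirtb (cplx X) z = (2:ℂ)⁻¹ • (toC3 (fderiv ℝ X z 1) + Complex.I • toC3 (fderiv ℝ X z Complex.I)) := by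
  rw [wirtb, fderiv_cplx X z hd, fderiv_cplx X z hd]

lemma reim_zero {x y : ℝ} (h : (x:ℂ) - (y:ℂ) * Complex.I = 0) : x = 0 ∧ y = 0 := by
  have h1 := congrArg Complex.re h
  have h2 := congrArg Complex.im h
  simp at h1 h2
  exact ⟨h1, h2⟩

lemma normal_eq (X : ℂ → Fin 3 → ℝ) (z : ℂ) (hd : DifferentiableAt ℝ X z)
    (hconf : cdot3 (wirt (cplx X) z) (wirt (cplx X) z) = 0)
    (r : ℝ) (hr : 0 < r)
    (hg : cdot3 (wirt (cplx X) z) (wirtb (cplx X) z) = (r : ℂ)) (c : ℝ) :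
    ((c:ℂ) * cdot3 (wirt (cplx X) z) (wirtb (cplx X) z)) • toC3 (unitNormal X z)
      = (-(Complex.I) * c) • crossC (wirt (cplx X) z) (wirtb (cplx X) z) := by
  obtain ⟨p, hp⟩ : ∃ p, fderiv ℝ X z 1 = p := ⟨_, rfl⟩
  obtain ⟨q, hq⟩ : ∃ q, fderiv ℝ X z Complex.I = q := ⟨_, rfl⟩
  have ha : wirt (cplx X) z = (2:ℂ)⁻¹ • (toC3 p - Complex.I • toC3 q) := by
    rw [wirt_cplx X z hd, hp, hq]
  have hb : wirtb (cplx X) z = (2:ℂ)⁻¹ • (toC3 p + Complex.I • toC3 q) := by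
    rw [wirtb_cplx X z hd, hp, hq]
  have e1 : cdot3 (wirt (cplx X) z) (wirt (cplx X) z) * 4
      = ((p 0 ^ 2 + p 1 ^ 2 + p 2 ^ 2 - (q 0 ^ 2 + q 1 ^ 2 + q 2 ^ 2) : ℝ) : ℂ)
        - ((2 * (p 0 * q 0 + p 1 * q 1 + p 2 * q 2) : ℝ) : ℂ) * Complex.I := by
    rw [ha]
    simp only [cdot3, Fin.sum_univ_three, Pi.smul_apply, Pi.sub_apply, toC3, smul_eq_mul,
      Pi.smul_apply]
    push_cast
    ring_nf
    simp only [Complex.I_sq]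
    ring
  have key1 := reim_zero (by rw [← e1, hconf, zero_mul])
  have hre := key1.1
  have him' := key1.2
  have him : p 0 * q 0 + p 1 * q 1 + p 2 * q 2 = 0 := by linarith
  have e2 : cdot3 (wirt (cplx X) z) (wirtb (cplx X) z) * 4
      = ((p 0 ^ 2 + p 1 ^ 2 + p 2 ^ 2 + (q 0 ^ 2 + q 1 ^ 2 + q 2 ^ 2) : ℝ) : ℂ) := by
    rw [ha, hb]
    simp only [cdot3, Fin.sum_univ_three, Pi.smul_apply, Pi.sub_apply, Pi.add_apply, toC3,
      smul_eq_mul, Pi.smul_apply]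
    push_cast
    ring_nf
    simp only [Complex.I_sq]
    ring
  have hsum : p 0 ^ 2 + p 1 ^ 2 + p 2 ^ 2 + (q 0 ^ 2 + q 1 ^ 2 + q 2 ^ 2) = 4 * r := by
    have : ((p 0 ^ 2 + p 1 ^ 2 + p 2 ^ 2 + (q 0 ^ 2 + q 1 ^ 2 + q 2 ^ 2) : ℝ) : ℂ)
        = ((4 * r : ℝ) : ℂ) := by
      rw [← e2, hg]; push_cast; ring
    exact_mod_cast this
  have hcross : (∑ i, crossR p q i ^ 2) = 4 * r ^ 2 := by
    simp only [Fin.sum_univ_three, crossR, Matrix.cons_val_zero, Matrix.cons_val_one,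
      Matrix.head_cons, Matrix.cons_val_two, Matrix.tail_cons]
    nlinarith [hre, him, hsum]
  have hrn : rnorm3 (crossR p q) = 2 * r := by
    rw [rnorm3, hcross, show (4 : ℝ) * r ^ 2 = (2 * r) ^ 2 by ring]
    exact Real.sqrt_sq (by linarith)
  have hn : unitNormal X z = (2 * r)⁻¹ • crossR p q := by
    rw [unitNormal, hp, hq, hrn]
  have hcc : crossC ((2:ℂ)⁻¹ • (toC3 p - Complex.I • toC3 q))
      ((2:ℂ)⁻¹ • (toC3 p + Complex.I • toC3 q))
      = (Complex.I * 2⁻¹) • toC3 (crossR p q) := by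
    funext i
    fin_cases i <;> simp [crossC, crossR, toC3] <;>
      (first
        | (push_cast; ring)
        | (push_cast; ring_nf; simp only [Complex.I_sq]; ring)
        | (ring_nf; simp only [Complex.I_sq]; push_cast; ring))
  have htoC3 : toC3 ((2 * r)⁻¹ • crossR p q) = (((2 * r : ℝ) : ℂ))⁻¹ • toC3 (crossR p q) := by
    funext i
    simp only [toC3, Pi.smul_apply, smul_eq_mul]
    push_cast
    ring
  rw [hg, hn, ha, hb, hcc, htoC3, smul_smul, smul_smul]
  congr 1
  rw [show (-(Complex.I) * (c:ℂ)) * (Complex.I * 2⁻¹) = (c:ℂ) / 2 by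
    linear_combination (-(c:ℂ)/2) * Complex.I_sq]
  have hr' : ((r:ℝ) : ℂ) ≠ 0 := by exact_mod_cast hr.ne'
  push_cast
  field_simp

/-- for a conformal immersion `X`, the `su(2)` connection with components
`A_z = c(∂X)·σ`, `A_z̄ = −c(∂̄X)·σ` is flat iff `X` has constant mean curvature `c`. -/
theorem zero_curvature_iff_cmc
    (U : Set ℂ) (hU : IsOpen U)
    (X : ℂ → Fin 3 → ℝ) (hX : ContDiffOn ℝ (⊤ : ℕ∞) X U)
    (hconf : ∀ z ∈ U, cdot3 (wirt (cplx X) z) (wirt (cplx X) z) = 0)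
    (hreg : ∀ z ∈ U, ∃ r : ℝ, 0 < r ∧ cdot3 (wirt (cplx X) z) (wirtb (cplx X) z) = (r : ℂ))
    (c : ℝ) (hc : c ≠ 0)
    (Az Azb : ℂ → Matrix (Fin 2) (Fin 2) ℂ)
    (hAz : ∀ z, Az z = (c : ℂ) • pauliDot (wirt (cplx X) z))
    (hAzb : ∀ z, Azb z = -((c : ℂ) • pauliDot (wirtb (cplx X) z))) :
    (∀ z ∈ U, wirtM Azb z - wirtbM Az z + Az z * Azb z - Azb z * Az z = 0) ↔
      (∀ z ∈ U, wirtb (fun w => wirt (cplx X) w) z =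
        ((c : ℂ) * cdot3 (wirt (cplx X) z) (wirtb (cplx X) z)) •
          toC3 (unitNormal X z)) := by
  have hcC : ((c : ℝ) : ℂ) ≠ 0 := Complex.ofReal_ne_zero.mpr hc
  have h2c : (-(2 * (c : ℂ))) ≠ 0 := by
    simp [hcC]
  apply forall₂_congr
  intro z hz
  have hfz : ContDiffAt ℝ 2 (cplx X) z := by
    have hXz : ContDiffAt ℝ 2 X z := (hX.contDiffAt (hU.mem_nhds hz)).of_le (by exact WithTop.coe_le_coe.mpr (le_top : (2:ℕ∞) ≤ ⊤))
    have he : cplx X = fun w => toC3L (X w) := rfl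
    rw [he]
    exact (toC3L.contDiff.contDiffAt).comp z hXz
  have hdX : DifferentiableAt ℝ X z :=
    (hX.contDiffAt (hU.mem_nhds hz)).differentiableAt (by simp)
  obtain ⟨r, hr, hgr⟩ := hreg z hz
  have hAzb' : Azb = fun w => (-(c:ℂ)) • pauliDot (wirtb (cplx X) w) := by
    funext w; rw [hAzb w, neg_smul]
  have hAz' : Az = fun w => (c:ℂ) • pauliDot (wirt (cplx X) w) := funext hAz
  have h1 : wirtM Azb z
      = (-(c:ℂ)) • pauliDot (wirtb (fun w => wirt (cplx X) w) z) := by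
    rw [hAzb', wirtM_smul_pauli _ _ _ (differentiableAt_wirtb _ _ hfz)]
    rw [wirt_wirtb_eq_wirtb_wirt _ _ hfz]
  have h2 : wirtbM Az z
      = (c:ℂ) • pauliDot (wirtb (fun w => wirt (cplx X) w) z) := by
    rw [hAz', wirtbM_smul_pauli _ _ _ (differentiableAt_wirt _ _ hfz)]
  have h3 : Az z * Azb z - Azb z * Az z
      = ((-(c:ℂ)^2) * (2 * Complex.I)) •
          pauliDot (crossC (wirt (cplx X) z) (wirtb (cplx X) z)) := by
    rw [hAz z, hAzb z, ← smul_smul, ← pauli_commutator]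
    simp only [mul_neg, neg_mul, Matrix.smul_mul, Matrix.mul_smul, smul_smul, neg_smul,
      smul_neg, neg_neg, smul_sub]
    module
  have rearr : wirtM Azb z - wirtbM Az z + Az z * Azb z - Azb z * Az z
      = (wirtM Azb z - wirtbM Az z) + (Az z * Azb z - Azb z * Az z) := by abel
  have key : wirtM Azb z - wirtbM Az z + Az z * Azb z - Azb z * Az z
      = pauliDot ((-(2*(c:ℂ))) • wirtb (fun w => wirt (cplx X) w) z
          + ((-(c:ℂ)^2) * (2 * Complex.I)) • crossC (wirt (cplx X) z) (wirtb (cplx X) z)) := by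
    rw [rearr, h1, h2, h3, pauliDot_add, pauliDot_smul, pauliDot_smul]
    module
  rw [key, pauliDot_eq_zero_iff,
    normal_eq X z hdX (hconf z hz) r hr hgr c]
  constructor
  · intro h
    funext i
    have hi := congrFun h i
    simp only [Pi.add_apply, Pi.smul_apply, Pi.zero_apply, smul_eq_mul] at hi
    show wirtb (fun w => wirt (cplx X) w) z i
      = ((-(Complex.I) * c) • crossC (wirt (cplx X) z) (wirtb (cplx X) z)) i
    simp only [Pi.smul_apply, smul_eq_mul]
    refine mul_left_cancel₀ h2c ?_
    linear_combination hi
  · intro h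
    rw [h]
    funext i
    simp only [Pi.add_apply, Pi.smul_apply, Pi.zero_apply, smul_eq_mul]
    ring
end
end

section
/- Let U ⊆ ℂ be open, H₀ a real constant, and X : U → ℝ³ a smooth conformal immersion of constant mean curvature H₀, i.e. ∂X·∂X = 0, g := ∂X·∂̄X > 0, and ∂̄∂X = H₀·g·n, where n := (∂ₓX × ∂_yX)/|∂ₓX × ∂_yX| is the unit normal. Then n satisfies the O(3) nonlinear sigma model equation: ∂̄∂n − (n·∂̄∂n)·n = 0 on U (i.e. the Laplacian of n is everywhere parallel to n). -/
open Complex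

noncomputable section

namespace O3Aux

/-! ### Generic Wirtinger-type operator calculus -/

variable {E : Type*} [NormedAddCommGroup E] [NormedSpace ℂ E]
variable {F : Type*} [NormedAddCommGroup F] [NormedSpace ℝ F]

/-- combined Wirtinger-type operator -/
def wop (c₁ c₂ : ℂ) (f : ℂ → E) (z : ℂ) : E :=
  c₁ • fderiv ℝ f z 1 + c₂ • fderiv ℝ f z Complex.I

theorem wirt_eq_wop (f : ℂ → E) (z : ℂ) :
    wirt f z = wop (2:ℂ)⁻¹ (-((2:ℂ)⁻¹ * Complex.I)) f z := by
  simp only [wirt, wop, smul_sub, smul_smul, neg_smul, sub_eq_add_neg]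
  module

theorem wirtb_eq_wop (f : ℂ → E) (z : ℂ) :
    wirtb f z = wop (2:ℂ)⁻¹ ((2:ℂ)⁻¹ * Complex.I) f z := by
  simp only [wirtb, wop, smul_add, smul_smul]

variable {c₁ c₂ : ℂ} {z : ℂ}

/-- smoothness at a point, all finite orders -/
def SmoothAt (f : ℂ → F) (z : ℂ) : Prop := ∀ m : ℕ, ContDiffAt ℝ m f z

theorem SmoothAt.differentiableAt {f : ℂ → F} (hf : SmoothAt f z) :
    DifferentiableAt ℝ f z :=
  (hf 1).differentiableAt (by norm_num)

theorem SmoothAt.contDiffAt2 {f : ℂ → F} (hf : SmoothAt f z) : ContDiffAt ℝ 2 f z := by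
  have := hf 2; exact_mod_cast this

theorem SmoothAt.fderivApply {f : ℂ → F} (hf : SmoothAt f z) (v : ℂ) :
    SmoothAt (fun w => fderiv ℝ f w v) z := by
  intro m
  have hD : ContDiffAt ℝ m (fderiv ℝ f) z := by
    have := (hf (m + 1)).fderiv_right (m := m) (by exact_mod_cast le_rfl)
    exact this
  exact (ContinuousLinearMap.apply ℝ F v).contDiff.contDiffAt.comp z hD

theorem SmoothAt.wop {f : ℂ → E} (hf : SmoothAt f z) :
    SmoothAt (fun w => wop c₁ c₂ f w) z := fun m =>
  (((hf.fderivApply 1) m).const_smul c₁).add (((hf.fderivApply Complex.I) m).const_smul c₂)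

theorem SmoothAt.wirt {f : ℂ → E} (hf : SmoothAt f z) :
    SmoothAt (fun w => wirt f w) z := by
  have := hf.wop (c₁ := (2:ℂ)⁻¹) (c₂ := -((2:ℂ)⁻¹ * Complex.I))
  simpa only [← wirt_eq_wop] using this

theorem SmoothAt.wirtb {f : ℂ → E} (hf : SmoothAt f z) :
    SmoothAt (fun w => wirtb f w) z := by
  have := hf.wop (c₁ := (2:ℂ)⁻¹) (c₂ := (2:ℂ)⁻¹ * Complex.I)
  simpa only [← wirtb_eq_wop] using this

theorem wop_congr {f g : ℂ → E} {U : Set ℂ} (hU : IsOpen U) (hz : z ∈ U)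
    (h : ∀ w ∈ U, f w = g w) : wop c₁ c₂ f z = wop c₁ c₂ g z := by
  have : f =ᶠ[nhds z] g := Filter.eventuallyEq_of_mem (hU.mem_nhds hz) h
  simp only [wop, this.fderiv_eq]

theorem wop_const_of_eqOn {f : ℂ → E} {U : Set ℂ} (hU : IsOpen U) (hz : z ∈ U)
    (c : E) (h : ∀ w ∈ U, f w = c) : wop c₁ c₂ f z = 0 := by
  rw [wop_congr hU hz h]
  simp [wop]

theorem wop_sum {ι : Type*} (s : Finset ι) (F' : ι → ℂ → E)
    (h : ∀ i ∈ s, DifferentiableAt ℝ (F' i) z) :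
    wop c₁ c₂ (fun w => ∑ i ∈ s, F' i w) z = ∑ i ∈ s, wop c₁ c₂ (F' i) z := by
  simp only [wop, fderiv_fun_sum h, ContinuousLinearMap.sum_apply, Finset.smul_sum,
    Finset.sum_add_distrib]

theorem wop_add {f g : ℂ → E} (hf : DifferentiableAt ℝ f z) (hg : DifferentiableAt ℝ g z) :
    wop c₁ c₂ (fun w => f w + g w) z = wop c₁ c₂ f z + wop c₁ c₂ g z := by
  simp only [wop, fderiv_fun_add hf hg, ContinuousLinearMap.add_apply]
  module

theorem wop_mul {f g : ℂ → ℂ} (hf : DifferentiableAt ℝ f z) (hg : DifferentiableAt ℝ g z) :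
    wop c₁ c₂ (fun w => f w * g w) z = wop c₁ c₂ f z * g z + f z * wop c₁ c₂ g z := by
  simp only [wop, fderiv_fun_mul hf hg, ContinuousLinearMap.add_apply,
    ContinuousLinearMap.smul_apply, smul_eq_mul]
  ring

theorem wop_smul_fn {f : ℂ → ℂ} {v : ℂ → E} (hf : DifferentiableAt ℝ f z)
    (hv : DifferentiableAt ℝ v z) :
    wop c₁ c₂ (fun w => f w • v w) z = wop c₁ c₂ f z • v z + f z • wop c₁ c₂ v z := by
  simp only [wop, fderiv_fun_smul hf hv, ContinuousLinearMap.add_apply,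
    ContinuousLinearMap.smul_apply, ContinuousLinearMap.smulRight_apply]
  simp only [smul_eq_mul]
  rw [smul_add, smul_add]
  module

theorem wop_apply {f : ℂ → Fin 3 → ℂ} (hf : DifferentiableAt ℝ f z) (i : Fin 3) :
    wop c₁ c₂ f z i = wop c₁ c₂ (fun w => f w i) z := by
  have hD : ∀ u : ℂ, fderiv ℝ (fun w => f w i) z u = fderiv ℝ f z u i := by
    intro u
    have h1 : (fun w => f w i) =
        (ContinuousLinearMap.proj (R := ℝ) (φ := fun _ : Fin 3 => ℂ) i) ∘ f := rfl
    rw [h1, fderiv_comp z (ContinuousLinearMap.differentiableAt _) hf,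
      ContinuousLinearMap.fderiv]
    rfl
  simp only [wop, hD, Pi.add_apply, Pi.smul_apply, smul_eq_mul]

theorem wop_cdot3 {f g : ℂ → Fin 3 → ℂ} (hf : DifferentiableAt ℝ f z)
    (hg : DifferentiableAt ℝ g z) :
    wop c₁ c₂ (fun w => cdot3 (f w) (g w)) z
      = cdot3 (wop c₁ c₂ f z) (g z) + cdot3 (f z) (wop c₁ c₂ g z) := by
  have hfi : ∀ i : Fin 3, DifferentiableAt ℝ (fun w => f w i) z := fun i =>
    differentiableAt_pi.1 hf i
  have hgi : ∀ i : Fin 3, DifferentiableAt ℝ (fun w => g w i) z := fun i =>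
    differentiableAt_pi.1 hg i
  have h1 : (fun w => cdot3 (f w) (g w)) = fun w => ∑ i, (fun w => f w i * g w i) w := rfl
  rw [h1, wop_sum _ (fun i w => f w i * g w i) (fun i _ => (hfi i).mul (hgi i))]
  simp only [fun i => wop_mul (c₁ := c₁) (c₂ := c₂) (hfi i) (hgi i), cdot3,
    Finset.sum_add_distrib, wop_apply hf, wop_apply hg]

theorem differentiableAt_cdot3 {f g : ℂ → Fin 3 → ℂ} (hf : DifferentiableAt ℝ f z)
    (hg : DifferentiableAt ℝ g z) :
    DifferentiableAt ℝ (fun w => cdot3 (f w) (g w)) z := by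
  have h1 : (fun w => cdot3 (f w) (g w)) = fun w => ∑ i, f w i * g w i := rfl
  rw [h1]
  exact DifferentiableAt.fun_sum fun i _ =>
    (differentiableAt_pi.1 hf i).mul (differentiableAt_pi.1 hg i)

/-! ### Second derivatives -/

theorem fderiv_fderiv_apply {f : ℂ → E} (hf : ContDiffAt ℝ 2 f z) (u v : ℂ) :
    fderiv ℝ (fun w => fderiv ℝ f w v) z u = fderiv ℝ (fderiv ℝ f) z u v := by
  have hD : DifferentiableAt ℝ (fderiv ℝ f) z :=
    (hf.fderiv_right (m := 1) (by norm_num)).differentiableAt (by norm_num)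
  rw [fderiv_clm_apply hD (differentiableAt_const v)]
  simp

theorem differentiableAt_fderiv_apply {f : ℂ → E} (hf : ContDiffAt ℝ 2 f z) (v : ℂ) :
    DifferentiableAt ℝ (fun w => fderiv ℝ f w v) z := by
  have hD : DifferentiableAt ℝ (fderiv ℝ f) z :=
    (hf.fderiv_right (m := 1) (by norm_num)).differentiableAt (by norm_num)
  exact hD.clm_apply (differentiableAt_const v)

theorem fderiv_wop {f : ℂ → E} (hf : ContDiffAt ℝ 2 f z) (u : ℂ) :
    fderiv ℝ (fun w => wop c₁ c₂ f w) z u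
      = c₁ • fderiv ℝ (fderiv ℝ f) z u 1 + c₂ • fderiv ℝ (fderiv ℝ f) z u Complex.I := by
  have h1 := differentiableAt_fderiv_apply hf (1 : ℂ)
  have hI := differentiableAt_fderiv_apply hf (Complex.I)
  have h2 : (fun w => wop c₁ c₂ f w)
      = fun w => c₁ • (fun w => fderiv ℝ f w 1) w + c₂ • (fun w => fderiv ℝ f w Complex.I) w :=
    rfl
  rw [h2, fderiv_fun_add (h1.fun_const_smul c₁) (hI.fun_const_smul c₂)]
  simp only [ContinuousLinearMap.add_apply]
  rw [fderiv_fun_const_smul h1, fderiv_fun_const_smul hI]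
  simp only [ContinuousLinearMap.smul_apply, fderiv_fderiv_apply hf]

theorem wop_wop {f : ℂ → E} (hf : ContDiffAt ℝ 2 f z) (d₁ d₂ : ℂ) :
    wop d₁ d₂ (fun w => wop c₁ c₂ f w) z
      = d₁ • (c₁ • fderiv ℝ (fderiv ℝ f) z 1 1 + c₂ • fderiv ℝ (fderiv ℝ f) z 1 Complex.I)
        + d₂ • (c₁ • fderiv ℝ (fderiv ℝ f) z Complex.I 1
          + c₂ • fderiv ℝ (fderiv ℝ f) z Complex.I Complex.I) := by
  rw [wop, fderiv_wop hf, fderiv_wop hf]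

theorem wirt_wirtb_comm {f : ℂ → E} (hf : ContDiffAt ℝ 2 f z) :
    wirtb (fun w => wirt f w) z = wirt (fun w => wirtb f w) z := by
  have hsym := hf.isSymmSndFDerivAt (n := 2) (by simp)
  have e1 : (fun w => wirt f w) = fun w => wop (2:ℂ)⁻¹ (-((2:ℂ)⁻¹ * Complex.I)) f w :=
    funext fun w => wirt_eq_wop f w
  have e2 : (fun w => wirtb f w) = fun w => wop (2:ℂ)⁻¹ ((2:ℂ)⁻¹ * Complex.I) f w :=
    funext fun w => wirtb_eq_wop f w
  rw [e1, e2, wirtb_eq_wop, wirt_eq_wop, wop_wop hf, wop_wop hf, hsym 1 Complex.I]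
  module

/-! ### Conjugation -/


/-- componentwise complex conjugation on ℂ³ -/
def starV (v : Fin 3 → ℂ) : Fin 3 → ℂ := fun i => (starRingEnd ℂ) (v i)

/-- conjugation as a continuous ℝ-linear map on ℂ³ -/
def starL : (Fin 3 → ℂ) →L[ℝ] (Fin 3 → ℂ) :=
  ContinuousLinearMap.pi fun i =>
    (Complex.conjCLE.toContinuousLinearMap).comp (ContinuousLinearMap.proj i)

theorem differentiableAt_starV {f : ℂ → Fin 3 → ℂ} (hf : DifferentiableAt ℝ f z) :
    DifferentiableAt ℝ (fun w => starV (f w)) z :=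
  (starL.differentiableAt).comp z hf

theorem fderiv_starV {f : ℂ → Fin 3 → ℂ} (hf : DifferentiableAt ℝ f z) (u : ℂ) :
    fderiv ℝ (fun w => starV (f w)) z u = starV (fderiv ℝ f z u) := by
  have h1 : (fun w => starV (f w)) = starL ∘ f := rfl
  rw [h1, fderiv_comp z starL.differentiableAt hf, ContinuousLinearMap.fderiv]
  rfl

theorem wirt_starV {f : ℂ → Fin 3 → ℂ} (hf : DifferentiableAt ℝ f z) :
    wirt (fun w => starV (f w)) z = starV (wirtb f z) := by
  funext i
  simp only [wirt, wirtb, fderiv_starV hf, starV, Pi.smul_apply, Pi.sub_apply, Pi.add_apply,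
    smul_eq_mul, map_mul, map_add, map_sub, Complex.conj_I, map_inv₀, map_ofNat]
  ring

theorem wirtb_starV {f : ℂ → Fin 3 → ℂ} (hf : DifferentiableAt ℝ f z) :
    wirtb (fun w => starV (f w)) z = starV (wirt f z) := by
  funext i
  simp only [wirt, wirtb, fderiv_starV hf, starV, Pi.smul_apply, Pi.sub_apply, Pi.add_apply,
    smul_eq_mul, map_mul, map_sub, map_add, Complex.conj_I, map_inv₀, map_ofNat]
  ring

theorem starV_toC3 (v : Fin 3 → ℝ) : starV (toC3 v) = toC3 v := by
  funext i; simp [starV, toC3]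

theorem starV_starV (v : Fin 3 → ℂ) : starV (starV v) = v := by
  funext i; simp [starV]

/-! ### cdot3 algebra -/

theorem cdot3_eq (a b : Fin 3 → ℂ) :
    cdot3 a b = a 0 * b 0 + a 1 * b 1 + a 2 * b 2 := by
  simp [cdot3, Fin.sum_univ_three]

theorem cdot3_comm (a b : Fin 3 → ℂ) : cdot3 a b = cdot3 b a := by
  simp only [cdot3_eq]; ring

theorem cdot3_smul_left (c : ℂ) (a b : Fin 3 → ℂ) :
    cdot3 (c • a) b = c * cdot3 a b := by
  simp only [cdot3_eq, Pi.smul_apply, smul_eq_mul]; ring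

theorem cdot3_smul_right (c : ℂ) (a b : Fin 3 → ℂ) :
    cdot3 a (c • b) = c * cdot3 a b := by
  simp only [cdot3_eq, Pi.smul_apply, smul_eq_mul]; ring

theorem cdot3_add_left (a a' b : Fin 3 → ℂ) :
    cdot3 (a + a') b = cdot3 a b + cdot3 a' b := by
  simp only [cdot3_eq, Pi.add_apply]; ring

theorem cdot3_add_right (a b b' : Fin 3 → ℂ) :
    cdot3 a (b + b') = cdot3 a b + cdot3 a b' := by
  simp only [cdot3_eq, Pi.add_apply]; ring

theorem cdot3_sub_left (a a' b : Fin 3 → ℂ) :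
    cdot3 (a - a') b = cdot3 a b - cdot3 a' b := by
  simp only [cdot3_eq, Pi.sub_apply]; ring

theorem cdot3_sub_right (a b b' : Fin 3 → ℂ) :
    cdot3 a (b - b') = cdot3 a b - cdot3 a b' := by
  simp only [cdot3_eq, Pi.sub_apply]; ring

theorem cdot3_starV (a b : Fin 3 → ℂ) :
    cdot3 (starV a) (starV b) = (starRingEnd ℂ) (cdot3 a b) := by
  simp only [cdot3_eq, starV, map_add, map_mul]

theorem cdot3_toC3 (u v : Fin 3 → ℝ) :
    cdot3 (toC3 u) (toC3 v) = ((∑ i, u i * v i : ℝ) : ℂ) := by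
  simp only [cdot3_eq, toC3, Fin.sum_univ_three]
  push_cast
  ring

theorem toC3_smul (t : ℝ) (v : Fin 3 → ℝ) :
    toC3 (t • v) = ((t : ℂ)) • toC3 v := by
  funext i
  simp [toC3]

/-! ### cross product -/

/-- cross product on ℂ³ -/
def crossC (a b : Fin 3 → ℂ) : Fin 3 → ℂ :=
  ![a 1 * b 2 - a 2 * b 1, a 2 * b 0 - a 0 * b 2, a 0 * b 1 - a 1 * b 0]

theorem toC3_crossR (a b : Fin 3 → ℝ) :
    toC3 (crossR a b) = crossC (toC3 a) (toC3 b) := by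
  funext i
  fin_cases i <;> simp [crossR, crossC, toC3]

theorem crossC_left (a b : Fin 3 → ℂ) : cdot3 (crossC a b) a = 0 := by
  simp only [cdot3_eq, crossC]
  simp [Matrix.cons_val_zero, Matrix.cons_val_one]
  ring

theorem crossC_right (a b : Fin 3 → ℂ) : cdot3 (crossC a b) b = 0 := by
  simp only [cdot3_eq, crossC]
  simp [Matrix.cons_val_zero, Matrix.cons_val_one]
  ring

theorem expansion (a b v : Fin 3 → ℂ) (hab : cdot3 a b = 0) :
    (cdot3 a a * cdot3 b b) • v
      = (cdot3 v a * cdot3 b b) • a + (cdot3 v b * cdot3 a a) • b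
        + cdot3 v (crossC a b) • crossC a b := by
  have hab' : a 0 * b 0 + a 1 * b 1 + a 2 * b 2 = 0 := by
    simpa [cdot3_eq] using hab
  funext i
  have e1 : cdot3 v a = v 0 * a 0 + v 1 * a 1 + v 2 * a 2 := cdot3_eq v a
  have e2 : cdot3 v b = v 0 * b 0 + v 1 * b 1 + v 2 * b 2 := cdot3_eq v b
  fin_cases i
  · simp only [cdot3_eq, e1, e2, crossC, Pi.smul_apply, Pi.add_apply, smul_eq_mul,
        Fin.zero_eta, Fin.mk_one, Fin.reduceFinMk,
        Matrix.cons_val_zero, Matrix.cons_val_one, Matrix.head_cons, Matrix.cons_val_two,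
        Matrix.tail_cons, Fin.isValue]
    linear_combination ((a 0 * b 0 + a 1 * b 1 + a 2 * b 2) * v 0
      - (v 0 * a 0 + v 1 * a 1 + v 2 * a 2) * b 0
      - (v 0 * b 0 + v 1 * b 1 + v 2 * b 2) * a 0) * hab'
  · simp only [cdot3_eq, e1, e2, crossC, Pi.smul_apply, Pi.add_apply, smul_eq_mul,
        Fin.zero_eta, Fin.mk_one, Fin.reduceFinMk,
        Matrix.cons_val_zero, Matrix.cons_val_one, Matrix.head_cons, Matrix.cons_val_two,
        Matrix.tail_cons, Fin.isValue]
    linear_combination ((a 0 * b 0 + a 1 * b 1 + a 2 * b 2) * v 1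
      - (v 0 * a 0 + v 1 * a 1 + v 2 * a 2) * b 1
      - (v 0 * b 0 + v 1 * b 1 + v 2 * b 2) * a 1) * hab'
  · simp only [cdot3_eq, e1, e2, crossC, Pi.smul_apply, Pi.add_apply, smul_eq_mul,
        Fin.zero_eta, Fin.mk_one, Fin.reduceFinMk,
        Matrix.cons_val_zero, Matrix.cons_val_one, Matrix.head_cons, Matrix.cons_val_two,
        Matrix.tail_cons, Fin.isValue]
    linear_combination ((a 0 * b 0 + a 1 * b 1 + a 2 * b 2) * v 2
      - (v 0 * a 0 + v 1 * a 1 + v 2 * a 2) * b 2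
      - (v 0 * b 0 + v 1 * b 1 + v 2 * b 2) * a 2) * hab'

theorem cross_norm_sq (a b : Fin 3 → ℝ) :
    (∑ i, crossR a b i ^ 2)
      = (∑ i, a i ^ 2) * (∑ i, b i ^ 2) - (∑ i, a i * b i) ^ 2 := by
  simp only [Fin.sum_univ_three, crossR]
  simp [Matrix.cons_val_zero, Matrix.cons_val_one]
  ring


/-! ### wirt/wirtb wrappers -/

theorem wirt_congr {f g : ℂ → E} {U : Set ℂ} (hU : IsOpen U) (hz : z ∈ U)
    (h : ∀ w ∈ U, f w = g w) : wirt f z = wirt g z := by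
  rw [wirt_eq_wop, wirt_eq_wop]; exact wop_congr hU hz h

theorem wirtb_congr {f g : ℂ → E} {U : Set ℂ} (hU : IsOpen U) (hz : z ∈ U)
    (h : ∀ w ∈ U, f w = g w) : wirtb f z = wirtb g z := by
  rw [wirtb_eq_wop, wirtb_eq_wop]; exact wop_congr hU hz h

theorem wirt_zero_of_eqOn {f : ℂ → E} {U : Set ℂ} (hU : IsOpen U) (hz : z ∈ U)
    (c : E) (h : ∀ w ∈ U, f w = c) : wirt f z = 0 := by
  rw [wirt_eq_wop]; exact wop_const_of_eqOn hU hz c h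

theorem wirtb_zero_of_eqOn {f : ℂ → E} {U : Set ℂ} (hU : IsOpen U) (hz : z ∈ U)
    (c : E) (h : ∀ w ∈ U, f w = c) : wirtb f z = 0 := by
  rw [wirtb_eq_wop]; exact wop_const_of_eqOn hU hz c h

theorem wirt_cdot3 {f g : ℂ → Fin 3 → ℂ} (hf : DifferentiableAt ℝ f z)
    (hg : DifferentiableAt ℝ g z) :
    wirt (fun w => cdot3 (f w) (g w)) z
      = cdot3 (wirt f z) (g z) + cdot3 (f z) (wirt g z) := by
  rw [wirt_eq_wop, wirt_eq_wop, wirt_eq_wop]; exact wop_cdot3 hf hg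

theorem wirtb_cdot3 {f g : ℂ → Fin 3 → ℂ} (hf : DifferentiableAt ℝ f z)
    (hg : DifferentiableAt ℝ g z) :
    wirtb (fun w => cdot3 (f w) (g w)) z
      = cdot3 (wirtb f z) (g z) + cdot3 (f z) (wirtb g z) := by
  rw [wirtb_eq_wop, wirtb_eq_wop, wirtb_eq_wop]; exact wop_cdot3 hf hg

theorem wirtb_add {f g : ℂ → E} (hf : DifferentiableAt ℝ f z)
    (hg : DifferentiableAt ℝ g z) :
    wirtb (fun w => f w + g w) z = wirtb f z + wirtb g z := by
  rw [wirtb_eq_wop, wirtb_eq_wop, wirtb_eq_wop]; exact wop_add hf hg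

theorem wirt_smul_fn {f : ℂ → ℂ} {v : ℂ → E} (hf : DifferentiableAt ℝ f z)
    (hv : DifferentiableAt ℝ v z) :
    wirt (fun w => f w • v w) z = wirt f z • v z + f z • wirt v z := by
  rw [wirt_eq_wop, wirt_eq_wop, wirt_eq_wop]; exact wop_smul_fn hf hv

theorem wirt_const_mul (c : ℂ) {f : ℂ → ℂ} (hf : DifferentiableAt ℝ f z) :
    wirt (fun w => c * f w) z = c * wirt f z := by
  rw [wirt_eq_wop, wirt_eq_wop]
  rw [wop_mul (differentiableAt_const c) hf]
  rw [show O3Aux.wop (2:ℂ)⁻¹ (-((2:ℂ)⁻¹ * Complex.I)) (fun _ => c) z = 0 from by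
    simp [O3Aux.wop]]
  ring

theorem starV_smul (c : ℂ) (v : Fin 3 → ℂ) :
    starV (c • v) = (starRingEnd ℂ c) • starV v := by
  funext i; simp [starV, Pi.smul_apply]


end O3Aux


namespace O3Aux

/-- the ℝ-linear embedding ℝ³ → ℂ³ as a CLM -/
def toC3L : (Fin 3 → ℝ) →L[ℝ] (Fin 3 → ℂ) :=
  ContinuousLinearMap.pi fun i => Complex.ofRealCLM.comp (ContinuousLinearMap.proj i)

theorem toC3L_apply (v : Fin 3 → ℝ) : toC3L v = toC3 v := rfl

theorem frame (U : Set ℂ) (hU : IsOpen U)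
    (X : ℂ → Fin 3 → ℝ) (hX : ContDiffOn ℝ (⊤ : ℕ∞) X U)
    (hconf : ∀ z ∈ U, cdot3 (wirt (cplx X) z) (wirt (cplx X) z) = 0)
    (hreg : ∀ z ∈ U, ∃ r : ℝ, 0 < r ∧ cdot3 (wirt (cplx X) z) (wirtb (cplx X) z) = (r : ℂ))
    (w : ℂ) (hw : w ∈ U) :
    ∃ r : ℝ, 0 < r ∧
      cdot3 (wirt (cplx X) w) (wirtb (cplx X) w) = ((r : ℝ) : ℂ) ∧
      cdot3 (toC3 (unitNormal X w)) (toC3 (unitNormal X w)) = 1 ∧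
      cdot3 (toC3 (unitNormal X w)) (wirt (cplx X) w) = 0 ∧
      cdot3 (toC3 (unitNormal X w)) (wirtb (cplx X) w) = 0 ∧
      SmoothAt (fun u => toC3 (unitNormal X u)) w ∧
      toC3 (fderiv ℝ X w 1) = wirt (cplx X) w + wirtb (cplx X) w ∧
      toC3 (fderiv ℝ X w Complex.I)
        = Complex.I • wirt (cplx X) w - Complex.I • wirtb (cplx X) w ∧
      cdot3 (toC3 (fderiv ℝ X w 1)) (toC3 (fderiv ℝ X w 1)) = ((2 * r : ℝ) : ℂ) ∧
      cdot3 (toC3 (fderiv ℝ X w Complex.I)) (toC3 (fderiv ℝ X w Complex.I))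
        = ((2 * r : ℝ) : ℂ) ∧
      cdot3 (toC3 (fderiv ℝ X w 1)) (toC3 (fderiv ℝ X w Complex.I)) = 0 ∧
      toC3 (crossR (fderiv ℝ X w 1) (fderiv ℝ X w Complex.I))
        = ((2 * r : ℝ) : ℂ) • toC3 (unitNormal X w) := by
  -- smoothness of X and its complexification at w
  have hXw : SmoothAt X w := fun m => (hX.contDiffAt (hU.mem_nhds hw)).of_le (by exact_mod_cast le_top)
  have hYdiff : DifferentiableAt ℝ (cplx X) w := by
    have : cplx X = fun u => toC3L (X u) := rfl
    rw [this]
    exact toC3L.differentiableAt.comp w hXw.differentiableAt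
  have hfc : ∀ u : ℂ, fderiv ℝ (cplx X) w u = toC3 (fderiv ℝ X w u) := by
    intro u
    have h1 : cplx X = toC3L ∘ X := rfl
    rw [h1, fderiv_comp w toC3L.differentiableAt hXw.differentiableAt,
      ContinuousLinearMap.fderiv]
    rfl
  set a : Fin 3 → ℝ := fderiv ℝ X w 1 with ha
  set b : Fin 3 → ℝ := fderiv ℝ X w Complex.I with hb
  have hφ : wirt (cplx X) w = (2:ℂ)⁻¹ • (toC3 a - Complex.I • toC3 b) := by
    rw [wirt, hfc, hfc]
  have hφb : wirtb (cplx X) w = (2:ℂ)⁻¹ • (toC3 a + Complex.I • toC3 b) := by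
    rw [wirtb, hfc, hfc]
  obtain ⟨r, hr, hgr⟩ := hreg w hw
  set SA : ℝ := ∑ i, a i * a i with hSAdef
  set SB : ℝ := ∑ i, b i * b i with hSBdef
  set AB : ℝ := ∑ i, a i * b i with hABdef
  -- conformality in real terms
  have h1 : cdot3 (wirt (cplx X) w) (wirt (cplx X) w)
      = (4:ℂ)⁻¹ * (((SA : ℂ) - (SB : ℂ)) - 2 * Complex.I * (AB : ℂ)) := by
    rw [hφ]
    simp only [cdot3_eq, Pi.smul_apply, Pi.sub_apply, smul_eq_mul, toC3,
      hSAdef, hSBdef, hABdef, Fin.sum_univ_three]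
    push_cast
    linear_combination ((4:ℂ)⁻¹ * ((b 0:ℂ)*(b 0:ℂ) + (b 1:ℂ)*(b 1:ℂ) + (b 2:ℂ)*(b 2:ℂ)))
      * Complex.I_sq
  have h2 : cdot3 (wirt (cplx X) w) (wirtb (cplx X) w)
      = (4:ℂ)⁻¹ * ((SA : ℂ) + (SB : ℂ)) := by
    rw [hφ, hφb]
    simp only [cdot3_eq, Pi.smul_apply, Pi.sub_apply, Pi.add_apply, smul_eq_mul, toC3,
      hSAdef, hSBdef, Fin.sum_univ_three]
    push_cast
    linear_combination (-(4:ℂ)⁻¹ * ((b 0:ℂ)*(b 0:ℂ) + (b 1:ℂ)*(b 1:ℂ) + (b 2:ℂ)*(b 2:ℂ)))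
      * Complex.I_sq
  have e0 : ((SA - SB : ℝ) : ℂ) - 2 * Complex.I * (AB : ℝ) = 0 := by
    have h := hconf w hw
    rw [h1] at h
    have h4 : (((SA : ℂ) - (SB : ℂ)) - 2 * Complex.I * (AB : ℂ)) = 0 := by
      field_simp at h
      linear_combination h
    push_cast
    linear_combination h4
  have hABz : AB = 0 := by
    have := congrArg Complex.im e0
    simpa using this
  have hSASB : SA = SB := by
    have := congrArg Complex.re e0
    simp [Complex.sub_re] at this
    linarith
  have hsum : SA + SB = 4 * r := by
    have h := hgr
    rw [h2] at h
    have h4 : ((SA + SB : ℝ) : ℂ) = ((4 * r : ℝ) : ℂ) := by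
      push_cast
      field_simp at h ⊢
      linear_combination h
    exact_mod_cast h4
  have hSA : SA = 2 * r := by linarith
  have hSB : SB = 2 * r := by linarith
  -- cross product norm
  have hq : (∑ i, crossR a b i ^ 2) = (2 * r) ^ 2 := by
    rw [cross_norm_sq]
    have e1 : (∑ i, a i ^ 2) = SA := by
      rw [hSAdef]; apply Finset.sum_congr rfl; intros; ring
    have e2 : (∑ i, b i ^ 2) = SB := by
      rw [hSBdef]; apply Finset.sum_congr rfl; intros; ring
    rw [e1, e2, hSA, hSB]
    have e3 : (∑ i : Fin 3, a i * b i) = 0 := hABz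
    rw [e3]
    ring
  have hρ : rnorm3 (crossR a b) = 2 * r := by
    rw [rnorm3, hq, Real.sqrt_sq (by linarith)]
  have hNdef : toC3 (unitNormal X w) = ((2 * r : ℝ) : ℂ)⁻¹ • toC3 (crossR a b) := by
    rw [unitNormal, ← ha, ← hb, toC3_smul, hρ]
    push_cast
    ring_nf
  have hcrA : cdot3 (toC3 (crossR a b)) (toC3 a) = 0 := by
    rw [toC3_crossR]; exact crossC_left _ _
  have hcrB : cdot3 (toC3 (crossR a b)) (toC3 b) = 0 := by
    rw [toC3_crossR]; exact crossC_right _ _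
  have hNN : cdot3 (toC3 (unitNormal X w)) (toC3 (unitNormal X w)) = 1 := by
    rw [hNdef, cdot3_smul_left, cdot3_smul_right, cdot3_toC3]
    have e1 : (∑ i, crossR a b i * crossR a b i) = (2*r)^2 := by
      rw [← hq]; apply Finset.sum_congr rfl; intros; ring
    rw [e1]
    have h2r : ((2 * r : ℝ) : ℂ) ≠ 0 := by
      exact_mod_cast (by positivity : (2 * r : ℝ) ≠ 0)
    have hrc : (r : ℂ) ≠ 0 := by exact_mod_cast hr.ne'
    push_cast
    field_simp
  have hNφ : cdot3 (toC3 (unitNormal X w)) (wirt (cplx X) w) = 0 := by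
    rw [hNdef, hφ, cdot3_smul_left, cdot3_smul_right, cdot3_sub_right, cdot3_smul_right,
      hcrA, hcrB]
    ring
  have hNφb : cdot3 (toC3 (unitNormal X w)) (wirtb (cplx X) w) = 0 := by
    rw [hNdef, hφb, cdot3_smul_left, cdot3_smul_right, cdot3_add_right, cdot3_smul_right,
      hcrA, hcrB]
    ring
  have hAv : toC3 a = wirt (cplx X) w + wirtb (cplx X) w := by
    rw [hφ, hφb]; module
  have hBv : toC3 b = Complex.I • wirt (cplx X) w - Complex.I • wirtb (cplx X) w := by
    rw [hφ, hφb]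
    match_scalars
    · linear_combination Complex.I_sq
    · ring
  have hAA : cdot3 (toC3 a) (toC3 a) = ((2 * r : ℝ) : ℂ) := by
    rw [cdot3_toC3, ← hSAdef, hSA]
  have hBB : cdot3 (toC3 b) (toC3 b) = ((2 * r : ℝ) : ℂ) := by
    rw [cdot3_toC3, ← hSBdef, hSB]
  have hABc : cdot3 (toC3 a) (toC3 b) = 0 := by
    rw [cdot3_toC3, ← hABdef, hABz]
    norm_num
  have hcrN : toC3 (crossR a b) = ((2 * r : ℝ) : ℂ) • toC3 (unitNormal X w) := by
    rw [hNdef, smul_smul]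
    have h2r : ((2 * r : ℝ) : ℂ) ≠ 0 := by
      exact_mod_cast (by positivity : (2 * r : ℝ) ≠ 0)
    rw [mul_inv_cancel₀ h2r, one_smul]
  -- smoothness of the unit normal
  have hSN : SmoothAt (fun u => toC3 (unitNormal X u)) w := by
    have hD1 : SmoothAt (fun u => fderiv ℝ X u 1) w := hXw.fderivApply 1
    have hDI : SmoothAt (fun u => fderiv ℝ X u Complex.I) w := hXw.fderivApply Complex.I
    have hD1i : ∀ i : Fin 3, SmoothAt (fun u => fderiv ℝ X u 1 i) w := fun i m =>
      contDiffAt_pi.1 (hD1 m) i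
    have hDIi : ∀ i : Fin 3, SmoothAt (fun u => fderiv ℝ X u Complex.I i) w := fun i m =>
      contDiffAt_pi.1 (hDI m) i
    have hcr : ∀ i : Fin 3,
        SmoothAt (fun u => crossR (fderiv ℝ X u 1) (fderiv ℝ X u Complex.I) i) w := by
      intro i
      fin_cases i <;>
        simp only [crossR, Fin.zero_eta, Fin.mk_one, Fin.reduceFinMk, Fin.isValue,
          Matrix.cons_val_zero, Matrix.cons_val_one, Matrix.head_cons, Matrix.cons_val_two,
          Matrix.tail_cons]
      · exact fun m => ((hD1i 1 m).mul (hDIi 2 m)).sub ((hD1i 2 m).mul (hDIi 1 m))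
      · exact fun m => ((hD1i 2 m).mul (hDIi 0 m)).sub ((hD1i 0 m).mul (hDIi 2 m))
      · exact fun m => ((hD1i 0 m).mul (hDIi 1 m)).sub ((hD1i 1 m).mul (hDIi 0 m))
    have hqs : SmoothAt
        (fun u => ∑ i, crossR (fderiv ℝ X u 1) (fderiv ℝ X u Complex.I) i ^ 2) w :=
      fun m => ContDiffAt.sum fun i _ => (hcr i m).pow 2
    have hq0 : (∑ i, crossR (fderiv ℝ X w 1) (fderiv ℝ X w Complex.I) i ^ 2) ≠ 0 := by
      have : (∑ i, crossR (fderiv ℝ X w 1) (fderiv ℝ X w Complex.I) i ^ 2)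
          = (2 * r) ^ 2 := hq
      rw [this]
      positivity
    have hsqrt : SmoothAt
        (fun u => rnorm3 (crossR (fderiv ℝ X u 1) (fderiv ℝ X u Complex.I))) w := by
      intro m
      have : (fun u => rnorm3 (crossR (fderiv ℝ X u 1) (fderiv ℝ X u Complex.I)))
          = fun u => Real.sqrt
              (∑ i, crossR (fderiv ℝ X u 1) (fderiv ℝ X u Complex.I) i ^ 2) := rfl
      rw [this]
      exact (Real.contDiffAt_sqrt hq0).comp w (hqs m)
    have hscal : SmoothAt (fun u =>
        ((rnorm3 (crossR (fderiv ℝ X u 1) (fderiv ℝ X u Complex.I)) : ℝ) : ℂ)⁻¹) w := by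
      intro m
      refine ContDiffAt.inv ?_ ?_
      · exact Complex.ofRealCLM.contDiff.contDiffAt.comp w (hsqrt m)
      · have : rnorm3 (crossR (fderiv ℝ X w 1) (fderiv ℝ X w Complex.I)) = 2 * r := hρ
        rw [this]
        exact_mod_cast (by positivity : (2 * r : ℝ) ≠ 0)
    have hvec : SmoothAt
        (fun u => toC3 (crossR (fderiv ℝ X u 1) (fderiv ℝ X u Complex.I))) w := by
      intro m
      exact contDiffAt_pi.2 fun i =>
        Complex.ofRealCLM.contDiff.contDiffAt.comp w (hcr i m)
    have hNfun : (fun u => toC3 (unitNormal X u))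
        = fun u i => ((rnorm3 (crossR (fderiv ℝ X u 1) (fderiv ℝ X u Complex.I)) : ℝ) : ℂ)⁻¹
            * toC3 (crossR (fderiv ℝ X u 1) (fderiv ℝ X u Complex.I)) i := by
      funext u i
      rw [unitNormal, toC3_smul, Complex.ofReal_inv]
      simp [Pi.smul_apply, smul_eq_mul]
    rw [hNfun]
    intro m
    exact contDiffAt_pi.2 fun i =>
      (hscal m).mul (Complex.ofRealCLM.contDiff.contDiffAt.comp w (hcr i m))
  exact ⟨r, hr, hgr, hNN, hNφ, hNφb, hSN, hAv, hBv, hAA, hBB, hABc, hcrN⟩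

end O3Aux

/-- the unit normal of a constant-mean-curvature conformal immersion
satisfies the O(3) nonlinear sigma model equation `∂̄∂n − (n·∂̄∂n)n = 0`. -/
theorem cmc_normal_satisfies_O3_sigma_model
    (U : Set ℂ) (hU : IsOpen U)
    (H₀ : ℝ)
    (X : ℂ → Fin 3 → ℝ) (hX : ContDiffOn ℝ (⊤ : ℕ∞) X U)
    (hconf : ∀ z ∈ U, cdot3 (wirt (cplx X) z) (wirt (cplx X) z) = 0)
    (hreg : ∀ z ∈ U, ∃ r : ℝ, 0 < r ∧ cdot3 (wirt (cplx X) z) (wirtb (cplx X) z) = (r : ℂ))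
    (hcmc : ∀ z ∈ U, wirtb (fun w => wirt (cplx X) w) z =
      ((H₀ : ℂ) * cdot3 (wirt (cplx X) z) (wirtb (cplx X) z)) • toC3 (unitNormal X z)) :
    ∀ z ∈ U,
      wirtb (fun w => wirt (fun u => toC3 (unitNormal X u)) w) z -
        cdot3 (toC3 (unitNormal X z))
            (wirtb (fun w => wirt (fun u => toC3 (unitNormal X u)) w) z) •
          toC3 (unitNormal X z) = 0 := by
  intro z hz
  classical
  set N' : ℂ → Fin 3 → ℂ := fun u => toC3 (unitNormal X u) with hN'def
  set φf : ℂ → Fin 3 → ℂ := fun u => wirt (cplx X) u with hφfdef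
  set φbf : ℂ → Fin 3 → ℂ := fun u => wirtb (cplx X) u with hφbfdef
  set gf : ℂ → ℂ := fun u => cdot3 (φf u) (φbf u) with hgfdef
  set Hc : ℂ := (H₀ : ℂ) with hHcdef
  -- smoothness
  have hXs : ∀ w ∈ U, O3Aux.SmoothAt X w := fun w hw m =>
    (hX.contDiffAt (hU.mem_nhds hw)).of_le (by exact_mod_cast le_top)
  have hYs : ∀ w ∈ U, O3Aux.SmoothAt (cplx X) w := by
    intro w hw m
    have h1 : cplx X = fun u => O3Aux.toC3L (X u) := rfl
    rw [h1]
    exact O3Aux.toC3L.contDiff.contDiffAt.comp w (hXs w hw m)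
  have hφs : ∀ w ∈ U, O3Aux.SmoothAt φf w := fun w hw => (hYs w hw).wirt
  have hφbs : ∀ w ∈ U, O3Aux.SmoothAt φbf w := fun w hw => (hYs w hw).wirtb
  have frame := fun (w : ℂ) (hw : w ∈ U) =>
    O3Aux.frame U hU X hX hconf hreg w hw
  have hNs : ∀ w ∈ U, O3Aux.SmoothAt N' w := by
    intro w hw
    obtain ⟨r', _, _, _, _, _, h, _⟩ := frame w hw
    exact h
  have hNNw : ∀ w ∈ U, cdot3 (N' w) (N' w) = 1 := by
    intro w hw
    obtain ⟨r', _, _, h, _⟩ := frame w hw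
    exact h
  have hNφw : ∀ w ∈ U, cdot3 (N' w) (φf w) = 0 := by
    intro w hw
    obtain ⟨r', _, _, _, h, _⟩ := frame w hw
    exact h
  have hφbstar : ∀ w ∈ U, φbf w = O3Aux.starV (φf w) := by
    intro w hw
    have h1 : (cplx X) = fun u => O3Aux.starV (cplx X u) := by
      funext u
      exact (O3Aux.starV_toC3 (X u)).symm
    calc φbf w = wirtb (fun u => O3Aux.starV (cplx X u)) w :=
          congrArg (fun f => wirtb f w) h1
      _ = O3Aux.starV (wirt (cplx X) w) := O3Aux.wirtb_starV (hYs w hw).differentiableAt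
      _ = O3Aux.starV (φf w) := rfl
  -- facts at z
  obtain ⟨r, hr, hg, hNN, hNφ, hNφb, hSN, hAv, hBv, hAA, hBB, hABc, hcrN⟩ := frame z hz
  have hgz : gf z = ((r : ℝ) : ℂ) := hg
  have hrc : ((r : ℝ) : ℂ) ≠ 0 := by exact_mod_cast hr.ne'
  have h2rc : ((2 * r : ℝ) : ℂ) ≠ 0 := by
    exact_mod_cast (by positivity : (2 * r : ℝ) ≠ 0)
  set A : Fin 3 → ℂ := toC3 (fderiv ℝ X z 1) with hAdef
  set B : Fin 3 → ℂ := toC3 (fderiv ℝ X z Complex.I) with hBdef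
  -- CMC at z
  have hcmcz : wirtb φf z = (Hc * gf z) • N' z := hcmc z hz
  have hcmcw : ∀ w ∈ U, wirtb φf w = (Hc * gf w) • N' w := fun w hw => hcmc w hw
  -- differentiability at z
  have dN : DifferentiableAt ℝ N' z := hSN.differentiableAt
  have dφ : DifferentiableAt ℝ φf z := (hφs z hz).differentiableAt
  have dφb : DifferentiableAt ℝ φbf z := (hφbs z hz).differentiableAt
  have dwN : DifferentiableAt ℝ (fun w => wirt N' w) z := hSN.wirt.differentiableAt
  have dwbN : DifferentiableAt ℝ (fun w => wirtb N' w) z := hSN.wirtb.differentiableAt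
  have dwφ : DifferentiableAt ℝ (fun w => wirt φf w) z := (hφs z hz).wirt.differentiableAt
  have dgf : DifferentiableAt ℝ gf z := O3Aux.differentiableAt_cdot3 dφ dφb
  -- tangency of derivatives of N
  have E1 : cdot3 (wirt N' z) (N' z) = 0 := by
    have h0 : wirt (fun w => cdot3 (N' w) (N' w)) z = 0 :=
      O3Aux.wirt_zero_of_eqOn hU hz 1 hNNw
    rw [O3Aux.wirt_cdot3 dN dN] at h0
    rw [O3Aux.cdot3_comm (N' z) (wirt N' z)] at h0
    linear_combination h0 / 2
  have E1b : cdot3 (wirtb N' z) (N' z) = 0 := by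
    have h0 : wirtb (fun w => cdot3 (N' w) (N' w)) z = 0 :=
      O3Aux.wirtb_zero_of_eqOn hU hz 1 hNNw
    rw [O3Aux.wirtb_cdot3 dN dN] at h0
    rw [O3Aux.cdot3_comm (N' z) (wirtb N' z)] at h0
    linear_combination h0 / 2
  -- first derivative of conformality
  have F1 : cdot3 (wirt φf z) (φf z) = 0 := by
    have h0 : wirt (fun w => cdot3 (φf w) (φf w)) z = 0 :=
      O3Aux.wirt_zero_of_eqOn hU hz 0 (fun w hw => hconf w hw)
    rw [O3Aux.wirt_cdot3 dφ dφ] at h0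
    rw [O3Aux.cdot3_comm (φf z) (wirt φf z)] at h0
    linear_combination h0 / 2
  -- derivative of conjugate phi
  have F2 : wirt φbf z = (Hc * ((r : ℝ) : ℂ)) • N' z := by
    have h1 : wirt φbf z = wirt (fun w => O3Aux.starV (φf w)) z :=
      O3Aux.wirt_congr hU hz hφbstar
    rw [h1, O3Aux.wirt_starV dφ, hcmcz, O3Aux.starV_smul, hgz]
    have h2 : (starRingEnd ℂ) (Hc * ((r : ℝ) : ℂ)) = Hc * ((r : ℝ) : ℂ) := by
      rw [hHcdef]
      simp [Complex.conj_ofReal]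
    rw [h2]
    congr 1
    exact O3Aux.starV_toC3 (unitNormal X z)
  -- derivative of the metric
  have F3 : cdot3 (wirt φf z) (φbf z) = wirt gf z := by
    have h0 : wirt gf z = cdot3 (wirt φf z) (φbf z) + cdot3 (φf z) (wirt φbf z) := by
      rw [hgfdef]
      exact O3Aux.wirt_cdot3 dφ dφb
    rw [F2, O3Aux.cdot3_smul_right] at h0
    have h1 : cdot3 (φf z) (N' z) = 0 := by
      rw [O3Aux.cdot3_comm]; exact hNφ
    rw [h1] at h0
    rw [h0]
    ring
  set Dg : ℂ := wirt gf z with hDgdef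
  -- derivative of N·φ = 0 in the antiholomorphic direction
  have G1 : cdot3 (wirtb N' z) (φf z) = -(Hc * ((r : ℝ) : ℂ)) := by
    have h0 : wirtb (fun w => cdot3 (N' w) (φf w)) z = 0 :=
      O3Aux.wirtb_zero_of_eqOn hU hz 0 hNφw
    rw [O3Aux.wirtb_cdot3 dN dφ] at h0
    rw [hcmcz, O3Aux.cdot3_smul_right, hNN, hgz] at h0
    linear_combination h0
  -- the central vanishing: ⟨∂̄∂N, φ⟩ = 0
  have S3 : cdot3 (wirtb (fun w => wirt N' w) z) (φf z)
      + cdot3 (wirt N' z) (wirtb φf z)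
      + (cdot3 (wirtb N' z) (wirt φf z)
        + cdot3 (N' z) (wirtb (fun w => wirt φf w) z)) = 0 := by
    have P1 : ∀ w ∈ U, cdot3 (wirt N' w) (φf w) + cdot3 (N' w) (wirt φf w) = 0 := by
      intro w hw
      have h0 : wirt (fun u => cdot3 (N' u) (φf u)) w = 0 :=
        O3Aux.wirt_zero_of_eqOn hU hw 0 hNφw
      rw [O3Aux.wirt_cdot3 ((hNs w hw).differentiableAt)
        ((hφs w hw).differentiableAt)] at h0
      exact h0
    have h0 : wirtb (fun w => cdot3 (wirt N' w) (φf w) + cdot3 (N' w) (wirt φf w)) z = 0 :=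
      O3Aux.wirtb_zero_of_eqOn hU hz 0 P1
    rw [O3Aux.wirtb_add (O3Aux.differentiableAt_cdot3 dwN dφ)
      (O3Aux.differentiableAt_cdot3 dN dwφ)] at h0
    rw [O3Aux.wirtb_cdot3 dwN dφ, O3Aux.wirtb_cdot3 dN dwφ] at h0
    linear_combination h0
  -- term 2 vanishes
  have T2 : cdot3 (wirt N' z) (wirtb φf z) = 0 := by
    rw [hcmcz, O3Aux.cdot3_smul_right, E1]
    ring
  -- term 4
  have T4 : cdot3 (N' z) (wirtb (fun w => wirt φf w) z) = Hc * Dg := by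
    have hcomm : wirtb (fun w => wirt φf w) z = wirt (fun w => wirtb φf w) z :=
      O3Aux.wirt_wirtb_comm (hφs z hz).contDiffAt2
    have hcongr : wirt (fun w => wirtb φf w) z
        = wirt (fun w => (Hc * gf w) • N' w) z :=
      O3Aux.wirt_congr hU hz hcmcw
    have hsm : wirt (fun w => (Hc * gf w) • N' w) z
        = wirt (fun w => Hc * gf w) z • N' z + (Hc * gf z) • wirt N' z :=
      O3Aux.wirt_smul_fn ((differentiableAt_const Hc).mul dgf) dN
    have hcm : wirt (fun w => Hc * gf w) z = Hc * Dg := by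
      rw [hDgdef]
      exact O3Aux.wirt_const_mul Hc dgf
    rw [hcomm, hcongr, hsm, hcm, O3Aux.cdot3_add_right, O3Aux.cdot3_smul_right,
      O3Aux.cdot3_smul_right, hNN]
    have h1 : cdot3 (N' z) (wirt N' z) = 0 := by
      rw [O3Aux.cdot3_comm]; exact E1
    rw [h1]
    ring
  -- term 3 via the basis expansion
  have T3 : cdot3 (wirtb N' z) (wirt φf z) = -(Hc * Dg) := by
    have hcrC : O3Aux.crossC A B = ((2 * r : ℝ) : ℂ) • N' z := by
      rw [hAdef, hBdef, ← O3Aux.toC3_crossR]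
      exact hcrN
    have Exp := O3Aux.expansion A B (wirtb N' z) hABc
    rw [hAA, hBB, hcrC] at Exp
    have hvc : cdot3 (wirtb N' z) (((2 * r : ℝ) : ℂ) • N' z) = 0 := by
      rw [O3Aux.cdot3_smul_right, E1b]
      ring
    rw [hvc, zero_smul, add_zero] at Exp
    -- pair both sides with ∂φ := wirt φf z
    have Epair := congrArg (fun v => cdot3 v (wirt φf z)) Exp
    simp only [O3Aux.cdot3_smul_left, O3Aux.cdot3_add_left] at Epair
    -- dot products with A and B
    have hAφ : cdot3 A (wirt φf z) = Dg := by
      rw [hAv, O3Aux.cdot3_add_left]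
      have e1 : cdot3 (φf z) (wirt φf z) = 0 := by
        rw [O3Aux.cdot3_comm]; exact F1
      have e2 : cdot3 (φbf z) (wirt φf z) = Dg := by
        rw [O3Aux.cdot3_comm, F3]
      rw [e1, e2, zero_add]
    have hBφ : cdot3 B (wirt φf z) = -(Complex.I * Dg) := by
      rw [hBv, O3Aux.cdot3_sub_left, O3Aux.cdot3_smul_left, O3Aux.cdot3_smul_left]
      have e1 : cdot3 (φf z) (wirt φf z) = 0 := by
        rw [O3Aux.cdot3_comm]; exact F1
      have e2 : cdot3 (φbf z) (wirt φf z) = Dg := by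
        rw [O3Aux.cdot3_comm, F3]
      rw [e1, e2]
      ring
    have hvA : cdot3 (wirtb N' z) A = -(Hc * ((r : ℝ) : ℂ)) + cdot3 (wirtb N' z) (φbf z) := by
      rw [hAv, O3Aux.cdot3_add_right, G1]
    have hvB : cdot3 (wirtb N' z) B
        = Complex.I * (-(Hc * ((r : ℝ) : ℂ))) - Complex.I * cdot3 (wirtb N' z) (φbf z) := by
      rw [hBv, O3Aux.cdot3_sub_right, O3Aux.cdot3_smul_right, O3Aux.cdot3_smul_right, G1]
    rw [hAφ, hBφ, hvA, hvB] at Epair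
    -- now a scalar identity; cancel (2r)²
    have hfactor : ((2 * r : ℝ) : ℂ) * ((2 * r : ℝ) : ℂ) * cdot3 (wirtb N' z) (wirt φf z)
        = ((2 * r : ℝ) : ℂ) * ((2 * r : ℝ) : ℂ) * (-(Hc * Dg)) := by
      have hcast : ((2 * r : ℝ) : ℂ) = 2 * ((r : ℝ) : ℂ) := by push_cast; ring
      rw [hcast]
      rw [hcast] at Epair
      linear_combination Epair + (2 * ((r : ℝ) : ℂ)
        * (Hc * ((r : ℝ) : ℂ) + cdot3 (wirtb N' z) (φbf z)) * Dg) * Complex.I_sq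
    exact mul_left_cancel₀ (mul_ne_zero h2rc h2rc) hfactor
  -- conclude ⟨∂̄∂N, φ⟩ = 0
  have hRφ : cdot3 (wirtb (fun w => wirt N' w) z) (φf z) = 0 := by
    linear_combination S3 - T2 - T3 - T4
  -- reality of ∂̄∂N and the conjugate pairing
  set R : Fin 3 → ℂ := wirtb (fun w => wirt N' w) z with hRdef
  have hRreal : R = O3Aux.starV R := by
    have hstep : ∀ w ∈ U, wirt N' w = O3Aux.starV (wirtb N' w) := by
      intro w hw
      have h1 : N' = fun u => O3Aux.starV (N' u) := by
        funext u
        exact (O3Aux.starV_toC3 (unitNormal X u)).symm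
      calc wirt N' w = wirt (fun u => O3Aux.starV (N' u)) w := by
            congr 1
        _ = O3Aux.starV (wirtb N' w) := O3Aux.wirt_starV (hNs w hw).differentiableAt
    calc R = wirtb (fun w => O3Aux.starV (wirtb N' w)) z := by
          rw [hRdef]
          exact O3Aux.wirtb_congr hU hz hstep
      _ = O3Aux.starV (wirt (fun w => wirtb N' w) z) := O3Aux.wirtb_starV dwbN
      _ = O3Aux.starV R := by
          rw [hRdef, O3Aux.wirt_wirtb_comm hSN.contDiffAt2]
  have hRφb : cdot3 R (φbf z) = 0 := by
    have h1 : cdot3 R (φbf z) = cdot3 (O3Aux.starV R) (O3Aux.starV (φf z)) := by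
      rw [← hRreal, ← hφbstar z hz]
    rw [h1, O3Aux.cdot3_starV, hRφ]
    simp
  have hRN : cdot3 R (N' z) = cdot3 (N' z) R := O3Aux.cdot3_comm _ _
  -- final expansion for T := R - λ • N
  set lam : ℂ := cdot3 (N' z) R with hlamdef
  set T : Fin 3 → ℂ := R - lam • N' z with hTdef
  have hTφ : cdot3 T (φf z) = 0 := by
    rw [hTdef, O3Aux.cdot3_sub_left, O3Aux.cdot3_smul_left, hRφ, hNφ]
    ring
  have hTφb : cdot3 T (φbf z) = 0 := by
    rw [hTdef, O3Aux.cdot3_sub_left, O3Aux.cdot3_smul_left, hRφb, hNφb]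
    ring
  have hTN : cdot3 T (N' z) = 0 := by
    rw [hTdef, O3Aux.cdot3_sub_left, O3Aux.cdot3_smul_left, hRN, hNN, hlamdef]
    ring
  have hTA : cdot3 T A = 0 := by
    rw [hAv, O3Aux.cdot3_add_right, hTφ, hTφb]
    ring
  have hTB : cdot3 T B = 0 := by
    rw [hBv, O3Aux.cdot3_sub_right, O3Aux.cdot3_smul_right, O3Aux.cdot3_smul_right,
      hTφ, hTφb]
    ring
  have hcrC : O3Aux.crossC A B = ((2 * r : ℝ) : ℂ) • N' z := by
    rw [hAdef, hBdef, ← O3Aux.toC3_crossR]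
    exact hcrN
  have Exp2 := O3Aux.expansion A B T hABc
  rw [hAA, hBB, hcrC, hTA, hTB] at Exp2
  have hTcr : cdot3 T (((2 * r : ℝ) : ℂ) • N' z) = 0 := by
    rw [O3Aux.cdot3_smul_right, hTN]
    ring
  rw [hTcr] at Exp2
  simp only [zero_mul, zero_smul, add_zero, zero_add] at Exp2
  have hTzero : T = 0 := by
    rw [smul_eq_zero] at Exp2
    rcases Exp2 with h | h
    · exact absurd h (mul_ne_zero h2rc h2rc)
    · exact h
  rw [hTdef] at hTzero
  exact hTzero

end
end

section
/- Let U ⊆ ℂ be open, H₀ ≠ 0 a real constant, ω : U → ℂ smooth, and X : U → ℝ³ smooth with ∂X = (∂ω̄)/(H₀(1+|ω|²)²)·(ω²−1, i(1+ω²), −2ω). Then the conformal factor of the induced metric equals (2/H₀²)·e^{φ₁}, i.e. ∂X·∂̄X = (2/H₀²)·(∂ω̄)(∂̄ω)/(1+|ω|²)² = 2|∂̄ω|²/(H₀²(1+|ω|²)²) on U; in particular the Toda field e^{φ₁} := (∂ω̄)(∂̄ω)/(1+|ω|²)² equals (H₀²/2) times the conformal factor of the induced metric. -/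
open Complex

noncomputable section

/-- toC3 as a continuous linear map -/
def L3 : (Fin 3 → ℝ) →L[ℝ] (Fin 3 → ℂ) :=
  ContinuousLinearMap.pi fun i => Complex.ofRealCLM.comp (ContinuousLinearMap.proj i)

lemma L3_apply (v : Fin 3 → ℝ) : L3 v = toC3 v := rfl

lemma wirt_conj_eq (f : ℂ → ℂ) (z : ℂ) (hf : DifferentiableAt ℝ f z) :
    wirt (fun w => (starRingEnd ℂ) (f w)) z = (starRingEnd ℂ) (wirtb f z) := by
  have h : fderiv ℝ (fun w => (starRingEnd ℂ) (f w)) z =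
      (Complex.conjCLE.toContinuousLinearMap).comp (fderiv ℝ f z) := by
    have h2 := fderiv_comp (𝕜 := ℝ) (g := ⇑Complex.conjCLE) (f := f) z
      (Complex.conjCLE.differentiableAt) hf
    rw [Complex.conjCLE.fderiv] at h2
    exact h2
  simp only [wirt, wirtb, h]
  simp [Complex.conjCLE_apply, smul_eq_mul, map_add, map_mul, Complex.conj_I, map_ofNat]
  ring

lemma wirtb_real (X : ℂ → Fin 3 → ℝ) (z : ℂ) (hX : DifferentiableAt ℝ X z) (i : Fin 3) :
    wirtb (fun w => toC3 (X w)) z i = (starRingEnd ℂ) (wirt (fun w => toC3 (X w)) z i) := by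
  have h : fderiv ℝ (fun w => toC3 (X w)) z = L3.comp (fderiv ℝ X z) := by
    have h2 := fderiv_comp (𝕜 := ℝ) (g := ⇑L3) (f := X) z L3.differentiableAt hX
    rw [L3.fderiv] at h2
    exact h2
  simp only [wirt, wirtb, h, ContinuousLinearMap.comp_apply]
  simp [L3, toC3, smul_eq_mul, Complex.ext_iff]

lemma key_alg (c d w q : ℂ) :
    (c*(w^2-1))*(d*(q^2-1)) + (c*(I*(1+w^2)))*(d*(-I*(1+q^2))) + (c*(-2*w))*(d*(-2*q))
      = 2*c*d*(1+w*q)^2 := by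
  linear_combination (-c*d*(1+w^2)*(1+q^2)) * Complex.I_sq

/-- geometric meaning of the first affine Toda field: the conformal factor
of the induced metric equals `(2/H₀²)·e^{φ₁}` with `e^{φ₁} = ∂ω̄ ∂̄ω/(1+|ω|²)²`. -/
theorem toda_field_phi1
    (U : Set ℂ) (hU : IsOpen U)
    (H₀ : ℝ) (hH₀ : H₀ ≠ 0)
    (ω : ℂ → ℂ) (hω : ContDiffOn ℝ (⊤ : ℕ∞) ω U)
    (X : ℂ → Fin 3 → ℝ) (hX : ContDiffOn ℝ (⊤ : ℕ∞) X U)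
    (hdX : ∀ z ∈ U, wirt (fun w => toC3 (X w)) z = kemPhi (fun _ => H₀) ω z) :
    ∀ z ∈ U,
      cdot3 (wirt (fun w => toC3 (X w)) z) (wirtb (fun w => toC3 (X w)) z) =
          ((2 / H₀ ^ 2 : ℝ) : ℂ) *
            (wirt (fun w => (starRingEnd ℂ) (ω w)) z * wirtb ω z /
              (1 + (Complex.normSq (ω z) : ℂ)) ^ 2) ∧
      cdot3 (wirt (fun w => toC3 (X w)) z) (wirtb (fun w => toC3 (X w)) z) =
          ((2 * ‖wirtb ω z‖ ^ 2 /
              (H₀ ^ 2 * (1 + Complex.normSq (ω z)) ^ 2) : ℝ) : ℂ) ∧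
      wirt (fun w => (starRingEnd ℂ) (ω w)) z * wirtb ω z /
          (1 + (Complex.normSq (ω z) : ℂ)) ^ 2 =
        ((H₀ ^ 2 / 2 : ℝ) : ℂ) *
          cdot3 (wirt (fun w => toC3 (X w)) z) (wirtb (fun w => toC3 (X w)) z) := by
  intro z hz
  have hωd : DifferentiableAt ℝ ω z :=
    (hω.differentiableOn (by simp)).differentiableAt (hU.mem_nhds hz)
  have hXd : DifferentiableAt ℝ X z :=
    (hX.differentiableOn (by simp)).differentiableAt (hU.mem_nhds hz)
  set w := ω z with hw
  set p := wirt (fun w => (starRingEnd ℂ) (ω w)) z with hpdef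
  have hp : (starRingEnd ℂ) p = wirtb ω z := by
    rw [hpdef, wirt_conj_eq ω z hωd]
    simp
  have hn : ((1 : ℂ) + (Complex.normSq w : ℂ)) ≠ 0 := by
    intro h
    have := congrArg Complex.re h
    simp at this
    nlinarith [Complex.normSq_nonneg w, this]
  have hnR : (1 : ℝ) + Complex.normSq w ≠ 0 := by
    intro h; nlinarith [Complex.normSq_nonneg w]
  have hHc : (H₀ : ℂ) ≠ 0 := by exact_mod_cast hH₀
  set c : ℂ := p / ((H₀ : ℂ) * (1 + (Complex.normSq w : ℂ)) ^ 2) with hcdef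
  have hcomp := wirtb_real X z hXd
  have hΦ := hdX z hz
  have hconjc : (starRingEnd ℂ) c =
      (starRingEnd ℂ) p / ((H₀ : ℂ) * (1 + (Complex.normSq w : ℂ)) ^ 2) := by
    simp [hcdef, map_div₀, Complex.conj_ofReal]
  have hsum : cdot3 (wirt (fun w => toC3 (X w)) z) (wirtb (fun w => toC3 (X w)) z)
      = 2 * c * (starRingEnd ℂ) c * (1 + (Complex.normSq w : ℂ)) ^ 2 := by
    simp only [cdot3, Fin.sum_univ_three, hcomp, hΦ, kemPhi, ← hw, ← hpdef, ← hcdef,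
      Pi.smul_apply, Matrix.cons_val_zero, Matrix.cons_val_one, Matrix.head_cons,
      Matrix.cons_val_two, Matrix.tail_cons, smul_eq_mul]
    rw [show ((Complex.normSq w : ℂ)) = w * (starRingEnd ℂ) w from (Complex.mul_conj w).symm]
    simp only [map_mul, map_sub, map_add, map_neg, map_pow, map_one, map_ofNat,
      Complex.conj_I]
    linear_combination key_alg c ((starRingEnd ℂ) c) w ((starRingEnd ℂ) w)
  have hpp : p * wirtb ω z = (Complex.normSq (wirtb ω z) : ℂ) := by
    rw [← hp, Complex.normSq_conj]
    exact Complex.mul_conj p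
  have key1 : cdot3 (wirt (fun w => toC3 (X w)) z) (wirtb (fun w => toC3 (X w)) z) =
      ((2 / H₀ ^ 2 : ℝ) : ℂ) *
        (p * wirtb ω z / (1 + (Complex.normSq w : ℂ)) ^ 2) := by
    rw [hsum, hconjc, hcdef, hp]
    field_simp
    push_cast
    field_simp
  refine ⟨key1, ?_, ?_⟩
  · rw [key1, hpp, Complex.sq_norm]
    push_cast
    field_simp
  · have h1 : ((H₀ ^ 2 / 2 : ℝ) : ℂ) * ((2 / H₀ ^ 2 : ℝ) : ℂ) = 1 := by
      push_cast
      field_simp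
    rw [key1, ← mul_assoc, h1, one_mul]
end
end
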